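/- arXiv:1307.0322 — 3 statements merged into one kernel-verified Lean document; each statement's English description precedes it below -/
import Mathlib

section
/- Let G be a topological group acting continuously on topological spaces E and B, and let p : E → B be a continuous G-equivariant map. Assume that for every x ∈ B there is an open neighborhood V of x and a continuous map s : V → G with s(v)·x = v for all v ∈ V. Then p is a locally trivial fibration: every point of B has an open neighborhood over which p is homeomorphic to a product projection. -/
open ContinuousMap Topology unitInterval

universe u

namespace Paper

variable {X : Type*} {Y : Type*} [TopologicalSpace X] [TopologicalSpace Y]

/-- The map induced by a continuous map on path components. -/
def pi0Map (f : C(X, Y)) : ZerothHomotopy X → ZerothHomotopy Y :=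
  Quotient.map (sa := pathSetoid X) (sb := pathSetoid Y) f
    (fun _ _ h => h.elim fun p => ⟨p.map f.continuous⟩)

/-- The map induced by a continuous map on generalized loops. -/
def genLoopMap (f : C(X, Y)) {N : Type*} {x : X} (p : GenLoop N X x) :
    GenLoop N Y (f x) :=
  ⟨f.comp p.1, fun y hy => by simp [p.2 y hy]⟩

theorem genLoopMap_homotopic (f : C(X, Y)) {N : Type*} {x : X} {p q : GenLoop N X x}
    (h : GenLoop.Homotopic p q) :
    GenLoop.Homotopic (genLoopMap f p) (genLoopMap f q) :=
  h.elim fun H => ⟨H.compContinuousMap f⟩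

/-- The map induced by a continuous map on homotopy groups. -/
def piMap (N : Type*) (f : C(X, Y)) (x : X) :
    HomotopyGroup N X x → HomotopyGroup N Y (f x) :=
  Quotient.map (genLoopMap f) fun _ _ h => genLoopMap_homotopic f h

/-- A map is a weak homotopy equivalence if it induces a bijection on path components and
on all homotopy groups at all basepoints. -/
def IsWeakHomotopyEquiv (f : X → Y) : Prop :=
  ∃ hf : Continuous f,
    Function.Bijective (pi0Map ⟨f, hf⟩) ∧
      ∀ (n : ℕ) (x : X), Function.Bijective (piMap (Fin n) ⟨f, hf⟩ x)

/-- A map is a Hurewicz fibration if it has the homotopy lifting property with respect to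
all topological spaces. -/
def IsHurewiczFibration {E B : Type*} [TopologicalSpace E] [TopologicalSpace B]
    (p : E → B) : Prop :=
  ∀ (A : Type u) [TopologicalSpace A], ∀ (H : C(A × I, B)) (g : C(A, E)),
    (∀ a, p (g a) = H (a, 0)) →
    ∃ G : C(A × I, E), (∀ a, G (a, 0) = g a) ∧ ∀ z, p (G z) = H z

open CategoryTheory Limits in
/-- A functor preserves reflexive coequalizers. -/
def PreservesReflexiveCoequalizers {A B : Type*} [Category A] [Category B] (F : A ⥤ B) : Prop :=
  ∀ {X Y : A} (f g : X ⟶ Y), IsReflexivePair f g →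
    ∀ c : Cofork f g, Nonempty (IsColimit c) → Nonempty (IsColimit (F.mapCocone c))

end Paper

open Paper

/-!
If `s : V → G` satisfies `s v • x = v`, equivariance moves the fibre over `v` onto the fibre
over `x` by `(s v)⁻¹`, and back by `s v`; both maps depend continuously on the point, so
`p⁻¹(V) ≃ₜ V × p⁻¹(x)` via `y ↦ (p y, (s (p y))⁻¹ • y)`.
-/

section OrbitSection

variable {G E B : Type*} [Group G] [MulAction G E] [MulAction G B] {V : Set B} {x : B}

theorem apply_inv_orbitSection_smul {p : E → B} {s : V → G}
    (hequiv : ∀ (g : G) (e : E), p (g • e) = g • p e) (hs : ∀ v : V, s v • x = v)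
    (y : {y : E // p y ∈ V}) :
    p ((s ⟨p y, y.2⟩)⁻¹ • (y : E)) = x := by
  rw [hequiv, inv_smul_eq_iff, hs]

theorem apply_orbitSection_smul {p : E → B} {s : V → G}
    (hequiv : ∀ (g : G) (e : E), p (g • e) = g • p e) (hs : ∀ v : V, s v • x = v)
    (v : V) (y : {y : E // p y = x}) :
    p (s v • (y : E)) = v := by
  rw [hequiv, y.2, hs]

variable [TopologicalSpace G] [TopologicalSpace E] [TopologicalSpace B] [ContinuousInv G]
  [ContinuousSMul G E]

def preimageHomeomorphOfOrbitSection (p : C(E, B))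
    (hequiv : ∀ (g : G) (e : E), p (g • e) = g • p e) (s : C(V, G))
    (hs : ∀ v : V, s v • x = v) : {y : E // p y ∈ V} ≃ₜ V × {y : E // p y = x} where
  toFun y :=
    (⟨p y, y.2⟩, ⟨(s ⟨p y, y.2⟩)⁻¹ • (y : E), apply_inv_orbitSection_smul hequiv hs y⟩)
  invFun z := ⟨s z.1 • (z.2 : E), by rw [apply_orbitSection_smul hequiv hs]; exact z.1.2⟩
  left_inv y := Subtype.ext (smul_inv_smul _ _)
  right_inv := by
    rintro ⟨v, y⟩
    have hv := apply_orbitSection_smul hequiv hs v y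
    have hfiber : ∀ w : V, (w : B) = v → (s w)⁻¹ • s v • (y : E) = y :=
      fun w hw => by rw [Subtype.ext hw, inv_smul_smul]
    exact Prod.ext (Subtype.ext hv) (Subtype.ext (hfiber _ hv))
  continuous_toFun := by
    have hbase : Continuous fun y : {y : E // p y ∈ V} => (⟨p y, y.2⟩ : V) := by fun_prop
    exact hbase.prodMk (((s.continuous.comp hbase).inv.smul continuous_subtype_val).subtype_mk _)
  continuous_invFun := by fun_prop

end OrbitSection

theorem locallyTrivial_of_local_sections_general
    {G E B : Type u} [Group G] [TopologicalSpace G] [IsTopologicalGroup G]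
    [TopologicalSpace E] [TopologicalSpace B]
    [MulAction G E] [ContinuousSMul G E] [MulAction G B]
    (p : C(E, B)) (hequiv : ∀ (g : G) (e : E), p (g • e) = g • p e)
    (hsec : ∀ x : B, ∃ V : Set B, IsOpen V ∧ x ∈ V ∧
      ∃ s : C(V, G), ∀ v : V, s v • x = (v : B)) :
    ∀ x : B, ∃ U : Set B, IsOpen U ∧ x ∈ U ∧
      ∃ e : {y : E // p y ∈ U} ≃ₜ U × {y : E // p y = x},
        ∀ y : {y : E // p y ∈ U}, ((e y).1 : B) = p y.1 := by
  intro x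
  obtain ⟨V, hV, hxV, s, hs⟩ := hsec x
  exact ⟨V, hV, hxV, preimageHomeomorphOfOrbitSection p hequiv s hs, fun _ => rfl⟩

/-- Cerf's criterion: if `p : E → B` is a `G`-equivariant map and every orbit map
`G → B`, `g ↦ g • x`, admits a continuous local section near every point, then `p` is a
locally trivial fibration: every point of `B` has an open neighborhood over which `p` is
homeomorphic to a product projection. -/
theorem locallyTrivial_of_local_sections
    {G E B : Type u} [Group G] [TopologicalSpace G] [IsTopologicalGroup G]
    [TopologicalSpace E] [TopologicalSpace B]
    [MulAction G E] [ContinuousSMul G E] [MulAction G B] [ContinuousSMul G B]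
    (p : C(E, B)) (hequiv : ∀ (g : G) (e : E), p (g • e) = g • p e)
    (hsec : ∀ x : B, ∃ V : Set B, IsOpen V ∧ x ∈ V ∧
      ∃ s : C(V, G), ∀ v : V, s v • x = (v : B)) :
    ∀ x : B, ∃ U : Set B, IsOpen U ∧ x ∈ U ∧
      ∃ e : {y : E // p y ∈ U} ≃ₜ U × {y : E // p y = x},
        ∀ y : {y : E // p y ∈ U}, ((e y).1 : B) = p y.1 :=
  locallyTrivial_of_local_sections_general p hequiv hsec
end

section
/- Every locally trivial fibration over a paracompact base is a Hurewicz fibration, i.e. it has the homotopy lifting property with respect to all topological spaces. -/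
/-!
Over a trivialising open set a path is lifted by freezing the fibre coordinate of its initial
point. Take a partition of unity `φ` on `B` subordinate to the trivialising cover. A tuple
`c = (c₀, …, cₙ₋₁)` of indices controls a path `ω` if `ω` maps `[m / n, (m + 1) / n]` into
`supp φ cₘ`; such a path can be lifted over any time window, one segment at a time. The weights
`∏ₘ min_{[m / n, (m + 1) / n]} (φ cₘ ∘ ω)`, after Dold's correction, form a locally finite
partition of unity `μ` on the path space, indexed by tuples. The global lift of `ω` runs through
the tuples active at `ω` in a fixed order, the tuple `c` lifting over the next window of length
`μ c ω`; it depends continuously on `ω` because a window of length zero is lifted trivially.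
-/

open ContinuousMap Topology unitInterval

universe u

open Paper

open Set Filter
open Function (support mem_support)

local notation "projI" => Set.projIcc (0 : ℝ) 1 zero_le_one

noncomputable section

theorem continuousWithinAt_of_subset_isClosed {α β : Type*} [TopologicalSpace α]
    [TopologicalSpace β] {f : α → β} {s C : Set α} {x : α} (hC : IsClosed C) (hsC : s ⊆ C)
    (h : x ∈ C → ContinuousWithinAt f s x) : ContinuousWithinAt f s x := by
  by_cases hx : x ∈ C
  · exact h hx
  · exact continuousWithinAt_of_notMem_closure fun hx' => hx (closure_minimal hsC hC hx')

theorem LocallyFinite.exists_isOpen_superset_finite {ι X : Type*} [TopologicalSpace X]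
    {f : ι → Set X} (hf : LocallyFinite f) {K : Set X} (hK : IsCompact K) :
    ∃ O, IsOpen O ∧ K ⊆ O ∧ {i | (f i ∩ O).Nonempty}.Finite := by
  refine hK.induction_on ⟨∅, isOpen_empty, subset_rfl, by simp⟩ ?_ ?_ ?_
  · rintro s t hst ⟨O, hO, htO, hfin⟩
    exact ⟨O, hO, hst.trans htO, hfin⟩
  · rintro s t ⟨O, hO, hsO, hfin⟩ ⟨O', hO', htO', hfin'⟩
    refine ⟨O ∪ O', hO.union hO', union_subset_union hsO htO', (hfin.union hfin').subset ?_⟩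
    rintro i ⟨x, hx, hxO | hxO'⟩
    exacts [Or.inl ⟨x, hx, hxO⟩, Or.inr ⟨x, hx, hxO'⟩]
  · intro x _
    obtain ⟨t, ht, hfin⟩ := hf x
    exact ⟨interior t, mem_nhdsWithin_of_mem_nhds (interior_mem_nhds.2 ht), interior t,
      isOpen_interior, subset_rfl, hfin.subset fun i ⟨y, hy, hyt⟩ => ⟨y, hy, interior_subset hyt⟩⟩

theorem List.finite_setOf_forall_mem_length_lt {α : Type*} (J : Set α) (hJ : J.Finite) (n : ℕ) :
    {l : List α | (∀ x ∈ l, x ∈ J) ∧ l.length < n}.Finite := by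
  have : Finite J := hJ
  refine ((List.finite_length_lt J n).image (List.map Subtype.val)).subset ?_
  rintro l ⟨hl, hlen⟩
  exact ⟨l.attach.map fun x => ⟨x.1, hl _ x.2⟩, by simpa using hlen, by simp⟩

theorem LocallyFinite.finsum_pos {ι X : Type*} [TopologicalSpace X] {f : ι → C(X, ℝ)}
    (hf : LocallyFinite fun i => support (f i)) (hf0 : ∀ i x, 0 ≤ f i x)
    (hpos : ∀ x, ∃ i, 0 < f i x) (x : X) : 0 < ∑ᶠ i, f i x :=
  _root_.finsum_pos (hf0 · x) (hpos x) (hf.point_finite x)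

namespace PartitionOfUnity

variable {ι X : Type*} [TopologicalSpace X]

def normalize (f : ι → C(X, ℝ)) (hf : LocallyFinite fun i => support (f i))
    (hf0 : ∀ i x, 0 ≤ f i x) (hpos : ∀ x, ∃ i, 0 < f i x) : PartitionOfUnity ι X where
  toFun i := ⟨fun x => f i x / ∑ᶠ j, f j x, (f i).continuous.div
    (continuous_finsum (fun j => (f j).continuous) hf)
    fun x => (hf.finsum_pos hf0 hpos x).ne'⟩
  locallyFinite' := hf.subset fun i x hx => left_ne_zero_of_mul hx
  nonneg' i x := div_nonneg (hf0 i x) (finsum_nonneg (hf0 · x))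
  sum_eq_one' x _ := by
    simp only [ContinuousMap.coe_mk, div_eq_mul_inv, ← finsum_mul]
    exact mul_inv_cancel₀ (hf.finsum_pos hf0 hpos x).ne'
  sum_le_one' x := by
    simp only [ContinuousMap.coe_mk, div_eq_mul_inv, ← finsum_mul]
    rw [mul_inv_cancel₀ (hf.finsum_pos hf0 hpos x).ne']

theorem normalize_apply (f : ι → C(X, ℝ)) (hf : LocallyFinite fun i => support (f i))
    (hf0 : ∀ i x, 0 ≤ f i x) (hpos : ∀ x, ∃ i, 0 < f i x) (i : ι) (x : X) :
    normalize f hf hf0 hpos i x = f i x / ∑ᶠ j, f j x := rfl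

theorem support_normalize (f : ι → C(X, ℝ)) (hf : LocallyFinite fun i => support (f i))
    (hf0 : ∀ i x, 0 ≤ f i x) (hpos : ∀ x, ∃ i, 0 < f i x) (i : ι) :
    support (normalize f hf hf0 hpos i) = support (f i) := by
  ext x
  simp [normalize_apply, (hf.finsum_pos hf0 hpos x).ne']

end PartitionOfUnity

namespace HomotopyLifting

variable {B : Type*} [TopologicalSpace B]

def subpath (ω : C(I, B)) (a b : ℝ) : C(I, B) :=
  ⟨fun t => ω (projI (a + t * (b - a))), by fun_prop⟩

theorem subpath_apply (ω : C(I, B)) (a b : ℝ) (t : I) :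
    subpath ω a b t = ω (projI (a + t * (b - a))) := rfl

@[fun_prop]
theorem continuous_subpath {X : Type*} [TopologicalSpace X] {ω : X → C(I, B)} {a b : X → ℝ}
    (hω : Continuous ω) (ha : Continuous a) (hb : Continuous b) :
    Continuous fun x => subpath (ω x) (a x) (b x) :=
  ContinuousMap.continuous_of_continuous_uncurry _
    (show Continuous fun q : X × I => ω q.1 (projI (a q.1 + q.2 * (b q.1 - a q.1))) by fun_prop)

@[simp] theorem subpath_zero (ω : C(I, B)) (a b : ℝ) : subpath ω a b 0 = ω (projI a) := by
  simp [subpath_apply]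

@[simp] theorem subpath_one (ω : C(I, B)) (a b : ℝ) : subpath ω a b 1 = ω (projI b) := by
  simp [subpath_apply]

theorem subpath_self (ω : C(I, B)) (a : ℝ) : subpath ω a a = const I (ω (projI a)) := by
  ext t
  simp [subpath_apply]

theorem add_mul_sub_mem_Icc {a b : ℝ} (hab : a ≤ b) (t : I) : a + t * (b - a) ∈ Icc a b :=
  ⟨by nlinarith [t.2.1], by nlinarith [t.2.2]⟩

def segInf (f : C(B, ℝ)) (a b : ℝ) (ω : C(I, B)) : ℝ :=
  sInf ((fun t => f (ω (projI t))) '' Icc a b)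

section segInf

variable {f : C(B, ℝ)} {a b : ℝ}

theorem continuous_segInf : Continuous (segInf f a b) :=
  isCompact_Icc.continuous_sInf (f := fun (ω : C(I, B)) t => f (ω (projI t))) (by fun_prop)

theorem segInf_le (ω : C(I, B)) {t : ℝ} (ht : t ∈ Icc a b) : segInf f a b ω ≤ f (ω (projI t)) :=
  csInf_le (isCompact_Icc.image (by fun_prop)).bddBelow ⟨t, ht, rfl⟩

theorem segInf_nonneg (hf : ∀ x, 0 ≤ f x) (ω : C(I, B)) : 0 ≤ segInf f a b ω :=
  Real.sInf_nonneg fun _ ⟨_, _, hy⟩ => hy ▸ hf _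

theorem segInf_pos_iff (hab : a ≤ b) (ω : C(I, B)) :
    0 < segInf f a b ω ↔ ∀ t ∈ Icc a b, 0 < f (ω (projI t)) := by
  refine ⟨fun h t ht => h.trans_le (segInf_le ω ht), fun h => ?_⟩
  obtain ⟨t, ht, hmin⟩ := (isCompact_Icc.image (f := fun t => f (ω (projI t)))
    (by fun_prop)).sInf_mem ((nonempty_Icc.2 hab).image _)
  rw [segInf, ← hmin]
  exact h t ht

end segInf

variable {E : Type*} [TopologicalSpace E]

def liftDomain (p : C(E, B)) (V : Set B) : Set (E × C(I, B)) :=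
  {z | p z.1 = z.2 0 ∧ ∀ t, z.2 t ∈ V}

structure LiftingFunctionOn (p : C(E, B)) (V : Set B) where
  lift : E × C(I, B) → C(I, E)
  continuousOn_lift : ContinuousOn lift (liftDomain p V)
  proj_lift : ∀ z ∈ liftDomain p V, ∀ t, p (lift z t) = z.2 t
  lift_const : ∀ x, p x ∈ V → lift (x, ContinuousMap.const I (p x)) = ContinuousMap.const I x

theorem mem_of_mem_liftDomain {p : C(E, B)} {V : Set B} {z : E × C(I, B)}
    (hz : z ∈ liftDomain p V) : p z.1 ∈ V :=
  hz.1 ▸ hz.2 0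

namespace LiftingFunctionOn

variable {p : C(E, B)} {V : Set B} {F : Type*} [TopologicalSpace F]
  (e : {x // p x ∈ V} ≃ₜ V × F) (he : ∀ x, ((e x).1 : B) = p x)

include he in
theorem trivialization_symm_apply_eq {x : {x // p x ∈ V}} {y : V} (hy : (y : B) = p x) :
    e.symm (y, (e x).2) = x := by
  rw [show y = (e x).1 from Subtype.ext (hy.trans (he x).symm), Homeomorph.symm_apply_apply]

def trivializationLift : C(liftDomain p V × I, E) :=
  ⟨fun q => (e.symm (⟨q.1.1.2 q.2, q.1.2.2 q.2⟩, (e ⟨q.1.1.1, mem_of_mem_liftDomain q.1.2⟩).2)).1,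
    by fun_prop⟩

open scoped Classical in
def ofTrivialization : LiftingFunctionOn p V where
  lift z := if h : z ∈ liftDomain p V then (trivializationLift e).curry ⟨z, h⟩
    else ContinuousMap.const I z.1
  continuousOn_lift := by
    rw [continuousOn_iff_continuous_domRestrict]
    refine (trivializationLift e).curry.continuous.congr fun z => ?_
    simp
  proj_lift z hz t := by
    simp only [dif_pos hz]
    exact (he _).symm.trans (by simp)
  lift_const x hx := by
    have hz : (x, ContinuousMap.const I (p x)) ∈ liftDomain p V := ⟨rfl, fun _ => hx⟩
    ext t
    simp only [dif_pos hz]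
    exact congrArg Subtype.val (trivialization_symm_apply_eq (x := ⟨x, hx⟩) e he rfl)

end LiftingFunctionOn

section liftStep

variable {p : C(E, B)} {V K : Set B} (L : LiftingFunctionOn p V)

def stepDomain (p : C(E, B)) (K : Set B) : Set (E × C(I, B) × ℝ × ℝ) :=
  {z | p z.1 = z.2.1 (projI z.2.2.1) ∧
    (z.2.2.1 < z.2.2.2 → ∀ t ∈ Icc z.2.2.1 z.2.2.2, z.2.1 (projI t) ∈ K)}

/-- For `z = (x, ω, a, b)`: the endpoint of the lift of `ω` over the time window `[a, b]`
starting at `x`; this encoding of windows is used throughout. -/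
def liftStep (z : E × C(I, B) × ℝ × ℝ) : E :=
  if z.2.2.2 ≤ z.2.2.1 then z.1 else L.lift (z.1, subpath z.2.1 z.2.2.1 z.2.2.2) 1

theorem liftStep_of_le {z : E × C(I, B) × ℝ × ℝ} (h : z.2.2.2 ≤ z.2.2.1) : liftStep L z = z.1 :=
  if_pos h

theorem liftStep_of_lt {z : E × C(I, B) × ℝ × ℝ} (h : z.2.2.1 < z.2.2.2) :
    liftStep L z = L.lift (z.1, subpath z.2.1 z.2.2.1 z.2.2.2) 1 :=
  if_neg h.not_ge

theorem subpath_mem_liftDomain (hKV : K ⊆ V) {z : E × C(I, B) × ℝ × ℝ}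
    (hz : z ∈ stepDomain p K) (hlt : z.2.2.1 < z.2.2.2) :
    (z.1, subpath z.2.1 z.2.2.1 z.2.2.2) ∈ liftDomain p V :=
  ⟨by simpa using hz.1, fun t => hKV (hz.2 hlt _ (add_mul_sub_mem_Icc hlt.le t))⟩

theorem proj_liftStep (hKV : K ⊆ V) {z : E × C(I, B) × ℝ × ℝ} (hz : z ∈ stepDomain p K) :
    p (liftStep L z) = z.2.1 (projI (max z.2.2.1 z.2.2.2)) := by
  rcases le_or_gt z.2.2.2 z.2.2.1 with h | h
  · rw [liftStep_of_le L h, max_eq_left h, hz.1]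
  · rw [liftStep_of_lt L h, max_eq_right h.le, L.proj_lift _ (subpath_mem_liftDomain hKV hz h),
      subpath_one]

/-- Continuity across `a = b` is where `lift_const` and the closedness of `K` enter. -/
theorem continuousWithinAt_liftStep (hK : IsClosed K) (hKV : K ⊆ V)
    {z₀ : E × C(I, B) × ℝ × ℝ} (hz₀ : z₀ ∈ stepDomain p K) :
    ContinuousWithinAt (liftStep L) (stepDomain p K) z₀ := by
  have hcover : stepDomain p K ⊆
      {z | z.2.2.2 ≤ z.2.2.1} ∪ (stepDomain p K ∩ {z | z.2.2.1 < z.2.2.2}) := fun z hz =>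
    (le_or_gt z.2.2.2 z.2.2.1).imp id fun h => ⟨hz, h⟩
  refine (ContinuousWithinAt.union ?_ ?_).mono hcover
  · refine continuousWithinAt_of_subset_isClosed (isClosed_le (by fun_prop) (by fun_prop))
      subset_rfl fun h₀ => ?_
    exact continuous_fst.continuousWithinAt.congr (fun z hz => liftStep_of_le L hz)
      (liftStep_of_le L h₀)
  · have hC : IsClosed {z : E × C(I, B) × ℝ × ℝ | z.2.2.1 ≤ z.2.2.2 ∧ z.2.1 (projI z.2.2.1) ∈ K} :=
      (isClosed_le (f := fun z : E × C(I, B) × ℝ × ℝ => z.2.2.1) (by fun_prop) (by fun_prop)).inter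
        (hK.preimage (f := fun z : E × C(I, B) × ℝ × ℝ => z.2.1 (projI z.2.2.1)) (by fun_prop))
    refine continuousWithinAt_of_subset_isClosed hC
      (fun z hz => ⟨hz.2.le, hz.1.2 hz.2 _ ⟨le_rfl, hz.2.le⟩⟩) fun ⟨hle, hmem⟩ => ?_
    have hdom : (z₀.1, subpath z₀.2.1 z₀.2.2.1 z₀.2.2.2) ∈ liftDomain p V := by
      rcases hle.lt_or_eq with hlt | heq
      · exact subpath_mem_liftDomain hKV hz₀ hlt
      · rw [← heq, subpath_self]
        exact ⟨by simpa using hz₀.1, fun _ => hKV hmem⟩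
    have hcont : ContinuousWithinAt (fun z : E × C(I, B) × ℝ × ℝ =>
        L.lift (z.1, subpath z.2.1 z.2.2.1 z.2.2.2) 1) (stepDomain p K ∩ {z | z.2.2.1 < z.2.2.2})
        z₀ :=
      (continuous_eval_const (1 : I)).continuousAt.comp_continuousWithinAt <|
        (L.continuousOn_lift _ hdom).comp (f := fun z : E × C(I, B) × ℝ × ℝ =>
          (z.1, subpath z.2.1 z.2.2.1 z.2.2.2)) (by fun_prop : Continuous _).continuousWithinAt
          fun z hz => subpath_mem_liftDomain hKV hz.1 hz.2
    refine hcont.congr (fun z hz => liftStep_of_lt L hz.2) ?_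
    rcases hle.lt_or_eq with hlt | heq
    · exact liftStep_of_lt L hlt
    · rw [liftStep_of_le L heq.ge]
      have hx := hz₀.1
      rw [← heq, subpath_self, ← hx, L.lift_const _ (hx ▸ hKV hmem)]
      rfl

end liftStep

section tuples

variable {ι : Type*}

def breakpoint (n : ℕ) (a b : ℝ) (k : ℕ) : ℝ := max a (min b (k / n))

variable {n : ℕ} {a b : ℝ}

theorem breakpoint_mono : Monotone (breakpoint n a b) := fun _ _ h =>
  max_le_max le_rfl (min_le_min le_rfl (by gcongr))

theorem breakpoint_of_le (h : b ≤ a) (k : ℕ) : breakpoint n a b k = a :=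
  max_eq_left ((min_le_left _ _).trans h)

theorem breakpoint_zero (ha : 0 ≤ a) : breakpoint n a b 0 = a := by
  simp [breakpoint, ha]

theorem breakpoint_self (hn : n ≠ 0) (hb : b ≤ 1) : breakpoint n a b n = max a b := by
  rw [breakpoint, div_self (Nat.cast_ne_zero.2 hn), min_eq_left hb]

theorem Icc_breakpoint_subset {k : ℕ} (h : breakpoint n a b k < breakpoint n a b (k + 1)) :
    Icc (breakpoint n a b k) (breakpoint n a b (k + 1)) ⊆ Icc ((k : ℝ) / n) ((k + 1) / n) := by
  have hk : (k : ℝ) / n ≤ (k + 1) / n := by gcongr; linarith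
  simp only [breakpoint, Nat.cast_add, Nat.cast_one, max_def, min_def] at h ⊢
  refine Icc_subset_Icc ?_ ?_ <;> split_ifs at h ⊢ <;> linarith

def SegmentwiseIn (K : ι → Set B) (n : ℕ) : List ι → ℕ → C(I, B) → Prop
  | [], _, _ => True
  | j :: l, k, ω =>
    (∀ t ∈ Icc ((k : ℝ) / n) ((k + 1) / n), ω (projI t) ∈ K j) ∧ SegmentwiseIn K n l (k + 1) ω

theorem SegmentwiseIn.mono {K K' : ι → Set B} (hKK' : ∀ i, K i ⊆ K' i) :
    ∀ {l : List ι} {k : ℕ} {ω : C(I, B)}, SegmentwiseIn K n l k ω → SegmentwiseIn K' n l k ω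
  | [], _, _, _ => trivial
  | _ :: _, _, _, ⟨h, hl⟩ => ⟨fun t ht => hKK' _ (h t ht), hl.mono hKK'⟩

theorem SegmentwiseIn.exists_mem {K : ι → Set B} :
    ∀ {l : List ι} {k : ℕ} {ω : C(I, B)}, SegmentwiseIn K n l k ω → ∀ i ∈ l, ∃ t, ω t ∈ K i
  | _ :: _, k, _, ⟨h, hl⟩, i, hi => by
    rcases List.mem_cons.1 hi with rfl | hi
    · exact ⟨_, h (k / n) ⟨le_rfl, by gcongr; linarith⟩⟩
    · exact hl.exists_mem i hi

theorem isClosed_setOf_segmentwiseIn {K : ι → Set B} (hK : ∀ i, IsClosed (K i)) :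
    ∀ (l : List ι) (k : ℕ), IsClosed {ω : C(I, B) | SegmentwiseIn K n l k ω}
  | [], _ => isClosed_univ
  | j :: l, k => by
    have hset : {ω : C(I, B) | SegmentwiseIn K n (j :: l) k ω} =
        (⋂ t ∈ Icc ((k : ℝ) / n) ((k + 1) / n), (fun ω : C(I, B) => ω (projI t)) ⁻¹' K j) ∩
          {ω | SegmentwiseIn K n l (k + 1) ω} := by
      ext
      simp [SegmentwiseIn]
    rw [hset]
    exact (isClosed_biInter fun t _ => (hK j).preimage (by fun_prop)).inter
      (isClosed_setOf_segmentwiseIn hK l (k + 1))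

theorem segmentwiseIn_map_range' {K : ι → Set B} {ω : C(I, B)} {c : ℕ → ι}
    (hc : ∀ m : ℕ, ∀ t ∈ Icc ((m : ℝ) / n) ((m + 1) / n), ω (projI t) ∈ K (c m)) :
    ∀ r k, SegmentwiseIn K n ((List.range' k r).map c) k ω
  | 0, _ => trivial
  | r + 1, k => ⟨hc k, segmentwiseIn_map_range' hc r (k + 1)⟩

def tupleControlled (K : ι → Set B) (c : List ι) : Set C(I, B) :=
  {ω | c ≠ [] ∧ SegmentwiseIn K c.length c 0 ω}

theorem isClosed_tupleControlled {K : ι → Set B} (hK : ∀ i, IsClosed (K i)) (c : List ι) :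
    IsClosed (tupleControlled K c) :=
  (isClosed_const (p := c ≠ [])).inter (isClosed_setOf_segmentwiseIn hK c 0)

theorem exists_mem_tupleControlled {O : ι → Set B} (hO : ∀ i, IsOpen (O i))
    (hcover : ∀ x, ∃ i, x ∈ O i) (ω : C(I, B)) : ∃ c, ω ∈ tupleControlled O c := by
  obtain ⟨δ, hδ, hball⟩ := lebesgue_number_lemma_of_metric isCompact_univ
    (fun i => (hO i).preimage ω.continuous) fun t _ => mem_iUnion.2 (hcover (ω t))
  obtain ⟨n, hn⟩ := exists_nat_one_div_lt hδ
  choose c hc using fun m : ℕ => hball (projI ((m : ℝ) / (n + 1 : ℕ))) (mem_univ _)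
  refine ⟨(List.range' 0 (n + 1)).map c, by simp, ?_⟩
  rw [List.length_map, List.length_range']
  refine segmentwiseIn_map_range' (K := O) (fun m t ht => hc m ?_) _ _
  rw [Metric.mem_ball, Subtype.dist_eq, Real.dist_eq]
  refine (abs_projIcc_sub_projIcc _).trans_lt ?_
  have h1 : t - m / (n + 1 : ℕ) ≤ 1 / (n + 1 : ℕ) := by
    have := ht.2
    have hsplit : ((m : ℝ) + 1) / (n + 1 : ℕ) = m / (n + 1 : ℕ) + 1 / (n + 1 : ℕ) := by ring
    linarith
  rw [abs_of_nonneg (sub_nonneg.2 ht.1)]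
  exact h1.trans_lt (by push_cast at hn ⊢; linarith)

section liftTuple

variable {p : C(E, B)} {U K : ι → Set B} (L : ∀ i, LiftingFunctionOn p (U i))

def tupleWindow (n k : ℕ) (z : E × C(I, B) × ℝ × ℝ) : E × C(I, B) × ℝ × ℝ :=
  (z.1, z.2.1, breakpoint n z.2.2.1 z.2.2.2 k, breakpoint n z.2.2.1 z.2.2.2 (k + 1))

def liftTuple (n : ℕ) : List ι → ℕ → E × C(I, B) × ℝ × ℝ → E
  | [], _, z => z.1
  | j :: l, k, z => liftTuple n l (k + 1) (liftStep (L j) (tupleWindow n k z), z.2)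

def tupleDomain (p : C(E, B)) (K : ι → Set B) (n : ℕ) (l : List ι) (k : ℕ) :
    Set (E × C(I, B) × ℝ × ℝ) :=
  {z | p z.1 = z.2.1 (projI (breakpoint n z.2.2.1 z.2.2.2 k)) ∧ SegmentwiseIn K n l k z.2.1}

variable {n : ℕ}

theorem liftTuple_of_le {z : E × C(I, B) × ℝ × ℝ} (h : z.2.2.2 ≤ z.2.2.1) :
    ∀ (l : List ι) (k : ℕ), liftTuple L n l k z = z.1
  | [], _ => rfl
  | j :: l, k => by
    rw [liftTuple, liftStep_of_le (L j) (by simp [tupleWindow, breakpoint_of_le h])]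
    exact liftTuple_of_le h l (k + 1)

theorem tupleWindow_mem_stepDomain {j : ι} {l : List ι} {k : ℕ} {z : E × C(I, B) × ℝ × ℝ}
    (hz : z ∈ tupleDomain p K n (j :: l) k) : tupleWindow n k z ∈ stepDomain p (K j) :=
  ⟨hz.1, fun hlt t ht => hz.2.1 t (Icc_breakpoint_subset hlt ht)⟩

theorem liftStep_mem_tupleDomain (hKU : ∀ i, K i ⊆ U i) {j : ι} {l : List ι} {k : ℕ}
    {z : E × C(I, B) × ℝ × ℝ} (hz : z ∈ tupleDomain p K n (j :: l) k) :
    (liftStep (L j) (tupleWindow n k z), z.2) ∈ tupleDomain p K n l (k + 1) := by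
  refine ⟨?_, hz.2.2⟩
  rw [proj_liftStep (L j) (hKU j) (tupleWindow_mem_stepDomain hz)]
  simp only [tupleWindow, max_eq_right (breakpoint_mono (Nat.le_succ k))]

theorem proj_liftTuple (hKU : ∀ i, K i ⊆ U i) :
    ∀ (l : List ι) (k : ℕ) {z : E × C(I, B) × ℝ × ℝ}, z ∈ tupleDomain p K n l k →
      p (liftTuple L n l k z) = z.2.1 (projI (breakpoint n z.2.2.1 z.2.2.2 (k + l.length)))
  | [], _, _, hz => hz.1
  | j :: l, k, z, hz => by
    rw [liftTuple, proj_liftTuple hKU l (k + 1) (liftStep_mem_tupleDomain L hKU hz),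
      List.length_cons, Nat.add_right_comm, Nat.add_assoc]

theorem continuousWithinAt_liftTuple (hK : ∀ i, IsClosed (K i)) (hKU : ∀ i, K i ⊆ U i) :
    ∀ (l : List ι) (k : ℕ) {z₀ : E × C(I, B) × ℝ × ℝ}, z₀ ∈ tupleDomain p K n l k →
      ContinuousWithinAt (liftTuple L n l k) (tupleDomain p K n l k) z₀
  | [], _, _, _ => continuous_fst.continuousWithinAt
  | j :: l, k, z₀, hz₀ => by
    have hwindow : Continuous (tupleWindow (E := E) (B := B) n k) := by
      unfold tupleWindow breakpoint
      fun_prop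
    have hstep : ContinuousWithinAt (fun z => (liftStep (L j) (tupleWindow n k z), z.2))
        (tupleDomain p K n (j :: l) k) z₀ :=
      ((continuousWithinAt_liftStep (L j) (hK j) (hKU j) (tupleWindow_mem_stepDomain hz₀)).comp
        hwindow.continuousWithinAt fun _ hz => tupleWindow_mem_stepDomain hz).prodMk
        continuous_snd.continuousWithinAt
    exact (continuousWithinAt_liftTuple hK hKU l (k + 1) (liftStep_mem_tupleDomain L hKU hz₀)).comp
      (f := fun z => (liftStep (L j) (tupleWindow n k z), z.2)) hstep
      fun _ hz => liftStep_mem_tupleDomain L hKU hz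

end liftTuple

end tuples

section WindowLift

def windowDomain (p : C(E, B)) (W : Set C(I, B)) : Set (E × C(I, B) × ℝ × ℝ) :=
  {z | z.2.1 ∈ W ∧ 0 ≤ z.2.2.1 ∧ z.2.2.2 ≤ 1 ∧ p z.1 = z.2.1 (projI z.2.2.1)}

/-- Lifts of the paths of `W` over time windows, recorded by their endpoints. -/
structure WindowLift (p : C(E, B)) (W : Set C(I, B)) where
  lift : E × C(I, B) × ℝ × ℝ → E
  continuousOn_lift : ContinuousOn lift (windowDomain p W)
  lift_of_le : ∀ z : E × C(I, B) × ℝ × ℝ, z.2.2.2 ≤ z.2.2.1 → lift z = z.1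
  proj_lift : ∀ z ∈ windowDomain p W, p (lift z) = z.2.1 (projI (max z.2.2.1 z.2.2.2))

variable {ι : Type*} {p : C(E, B)} {U K : ι → Set B}

theorem mem_tupleDomain_of_mem_windowDomain {c : List ι} {z : E × C(I, B) × ℝ × ℝ}
    (hz : z ∈ windowDomain p (tupleControlled K c)) : z ∈ tupleDomain p K c.length c 0 :=
  ⟨by rw [breakpoint_zero hz.2.1]; exact hz.2.2.2, hz.1.2⟩

def WindowLift.ofTuple (L : ∀ i, LiftingFunctionOn p (U i)) (hK : ∀ i, IsClosed (K i))
    (hKU : ∀ i, K i ⊆ U i) (c : List ι) : WindowLift p (tupleControlled K c) where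
  lift := liftTuple L c.length c 0
  continuousOn_lift z hz := (continuousWithinAt_liftTuple L hK hKU c 0
    (mem_tupleDomain_of_mem_windowDomain hz)).mono fun _ => mem_tupleDomain_of_mem_windowDomain
  lift_of_le z h := liftTuple_of_le L h c 0
  proj_lift z hz := by
    rw [proj_liftTuple L hKU c 0 (mem_tupleDomain_of_mem_windowDomain hz), zero_add,
      breakpoint_self (by simpa using hz.1.1) hz.2.2.1]

end WindowLift

section pathPartition

variable {ι : Type*} (φ : PartitionOfUnity ι B)

def segmentWeight (n : ℕ) : List ι → ℕ → C(I, B) → ℝ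
  | [], _, _ => 1
  | j :: l, k, ω => segInf (φ j) (k / n) ((k + 1) / n) ω * segmentWeight n l (k + 1) ω

variable {n : ℕ}

theorem continuous_segmentWeight : ∀ (l : List ι) (k : ℕ), Continuous (segmentWeight φ n l k)
  | [], _ => continuous_const
  | _ :: l, k => continuous_segInf.mul (continuous_segmentWeight l (k + 1))

theorem segmentWeight_nonneg : ∀ (l : List ι) (k : ℕ) (ω : C(I, B)), 0 ≤ segmentWeight φ n l k ω
  | [], _, _ => zero_le_one
  | _ :: l, k, ω => mul_nonneg (segInf_nonneg (φ.nonneg _) ω) (segmentWeight_nonneg l (k + 1) ω)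

theorem segmentWeight_le_one : ∀ (l : List ι) (k : ℕ) (ω : C(I, B)), segmentWeight φ n l k ω ≤ 1
  | [], _, _ => le_rfl
  | _ :: l, k, ω => mul_le_one₀
    ((segInf_le ω ⟨le_rfl, by gcongr; linarith⟩).trans (φ.le_one _ _))
    (segmentWeight_nonneg φ l (k + 1) ω) (segmentWeight_le_one l (k + 1) ω)

theorem segmentWeight_pos_iff : ∀ (l : List ι) (k : ℕ) (ω : C(I, B)),
    0 < segmentWeight φ n l k ω ↔ SegmentwiseIn (fun i => support (φ i)) n l k ω
  | [], _, _ => iff_of_true zero_lt_one trivial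
  | j :: l, k, ω => by
    rw [segmentWeight, mul_pos_iff, or_iff_left fun h => (segInf_nonneg (φ.nonneg _) ω).not_gt h.1,
      segInf_pos_iff (by gcongr; linarith), segmentWeight_pos_iff l (k + 1) ω, SegmentwiseIn]
    simp only [mem_support, (φ.nonneg _ _).lt_iff_ne', ne_eq]

def tupleWeight (c : List ι) (ω : C(I, B)) : ℝ :=
  if c = [] then 0 else segmentWeight φ c.length c 0 ω

theorem continuous_tupleWeight (c : List ι) : Continuous (tupleWeight φ c) := by
  unfold tupleWeight
  split_ifs
  exacts [continuous_const, continuous_segmentWeight φ c 0]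

theorem tupleWeight_nonneg (c : List ι) (ω : C(I, B)) : 0 ≤ tupleWeight φ c ω := by
  unfold tupleWeight
  split_ifs
  exacts [le_rfl, segmentWeight_nonneg φ c 0 ω]

theorem tupleWeight_le_one (c : List ι) (ω : C(I, B)) : tupleWeight φ c ω ≤ 1 := by
  unfold tupleWeight
  split_ifs
  exacts [zero_le_one, segmentWeight_le_one φ c 0 ω]

theorem support_tupleWeight (c : List ι) :
    support (tupleWeight φ c) = tupleControlled (fun i => support (φ i)) c := by
  ext ω
  rw [mem_support, ← (tupleWeight_nonneg φ c ω).lt_iff_ne', tupleControlled, mem_ofPred_eq,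
    tupleWeight]
  split_ifs with hc
  · simp [hc]
  · rw [segmentWeight_pos_iff, and_iff_right hc]

theorem exists_tupleWeight_pos (ω : C(I, B)) : ∃ c, 0 < tupleWeight φ c ω := by
  obtain ⟨c, hc⟩ := exists_mem_tupleControlled (fun i => (φ i).continuous.isOpen_support)
    (fun x => (φ.exists_pos (mem_univ x)).imp fun _ h => h.ne') ω
  rw [← support_tupleWeight] at hc
  exact ⟨c, (tupleWeight_nonneg φ c ω).lt_of_ne' hc⟩

theorem exists_finite_eventually_mem_of_tupleWeight_ne_zero (ω₀ : C(I, B)) :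
    ∃ J : Set ι, J.Finite ∧
      ∀ᶠ ω in 𝓝 ω₀, ∀ c, tupleWeight φ c ω ≠ 0 → ∀ i ∈ c, i ∈ J := by
  obtain ⟨O, hO, hωO, hfin⟩ :=
    φ.locallyFinite.exists_isOpen_superset_finite (isCompact_range ω₀.continuous)
  refine ⟨_, hfin, ?_⟩
  filter_upwards [(ContinuousMap.isOpen_setOfPred_mapsTo isCompact_univ hO).mem_nhds
    fun t _ => hωO (mem_range_self t)] with ω hω c hc i hi
  obtain ⟨t, ht⟩ := (show ω ∈ tupleControlled _ c by rwa [← support_tupleWeight]).2.exists_mem i hi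
  exact ⟨ω t, ht, hω (mem_univ t)⟩

theorem locallyFinite_tupleWeight_length_lt (n : ℕ) :
    LocallyFinite fun c : {c : List ι // c.length < n} => support (tupleWeight φ c) := by
  intro ω₀
  obtain ⟨J, hJ, hev⟩ := exists_finite_eventually_mem_of_tupleWeight_ne_zero φ ω₀
  refine ⟨_, hev, ((List.finite_setOf_forall_mem_length_lt J hJ n).preimage
    Subtype.val_injective.injOn).subset ?_⟩
  rintro c ⟨ω, hc, hω⟩
  exact ⟨hω c hc, c.2⟩

def shortWeightSum (n : ℕ) (ω : C(I, B)) : ℝ :=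
  ∑ᶠ c : {c : List ι // c.length < n}, tupleWeight φ c ω

theorem continuous_shortWeightSum (n : ℕ) : Continuous (shortWeightSum φ n) :=
  continuous_finsum (fun c => continuous_tupleWeight φ c) (locallyFinite_tupleWeight_length_lt φ n)

theorem shortWeightSum_nonneg (n : ℕ) (ω : C(I, B)) : 0 ≤ shortWeightSum φ n ω :=
  finsum_nonneg fun c => tupleWeight_nonneg φ c ω

theorem tupleWeight_le_shortWeightSum {c : List ι} (hc : c.length < n) (ω : C(I, B)) :
    tupleWeight φ c ω ≤ shortWeightSum φ n ω :=
  single_le_finsum (f := fun c : {c : List ι // c.length < n} => tupleWeight φ c ω) ⟨c, hc⟩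
    ((locallyFinite_tupleWeight_length_lt φ n).point_finite ω)
    fun c => tupleWeight_nonneg φ c ω

/-- Dold's correction of `tupleWeight`, which makes the family locally finite: a long tuple only
keeps weight where all shorter tuples together have little weight. -/
def correctedWeight (c : List ι) : C(C(I, B), ℝ) :=
  ⟨fun ω => max 0 (tupleWeight φ c ω - c.length * shortWeightSum φ c.length ω), by
    have := continuous_tupleWeight φ c
    have := continuous_shortWeightSum φ c.length
    fun_prop⟩

theorem correctedWeight_apply (c : List ι) (ω : C(I, B)) :
    correctedWeight φ c ω = max 0 (tupleWeight φ c ω - c.length * shortWeightSum φ c.length ω) :=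
  rfl

theorem correctedWeight_nonneg (c : List ι) (ω : C(I, B)) : 0 ≤ correctedWeight φ c ω :=
  le_max_left _ _

theorem correctedWeight_eq_zero_of_one_le {c : List ι} {ω : C(I, B)}
    (h : 1 ≤ c.length * shortWeightSum φ c.length ω) : correctedWeight φ c ω = 0 :=
  max_eq_left (by linarith [tupleWeight_le_one φ c ω])

theorem support_correctedWeight_subset (c : List ι) :
    support (correctedWeight φ c) ⊆ support (tupleWeight φ c) := fun ω hω h0 =>
  hω (max_eq_left (by
    nlinarith [shortWeightSum_nonneg φ c.length ω, (Nat.cast_nonneg c.length : (0 : ℝ) ≤ _)]))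

theorem locallyFinite_correctedWeight :
    LocallyFinite fun c : List ι => support (correctedWeight φ c) := by
  intro ω₀
  obtain ⟨J, hJ, hev⟩ := exists_finite_eventually_mem_of_tupleWeight_ne_zero φ ω₀
  obtain ⟨c₀, hc₀⟩ := exists_tupleWeight_pos φ ω₀
  set ε := tupleWeight φ c₀ ω₀ / 2
  obtain ⟨N, hN⟩ := exists_nat_gt (max (c₀.length : ℝ) (1 / ε))
  have hc₀N : c₀.length < N := by exact_mod_cast (le_max_left _ _).trans_lt hN
  have hεN : 1 < N * ε := by
    have := (le_max_right _ _).trans_lt hN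
    rwa [div_lt_iff₀ (by positivity)] at this
  have hnear : ∀ᶠ ω in 𝓝 ω₀, ε < tupleWeight φ c₀ ω :=
    (continuous_tupleWeight φ c₀).continuousAt.eventually_const_lt (half_lt_self hc₀)
  refine ⟨_, hev.and hnear, (List.finite_setOf_forall_mem_length_lt J hJ N).subset ?_⟩
  rintro c ⟨ω, hc, hωJ, hωε⟩
  refine ⟨hωJ c (support_correctedWeight_subset φ c hc), not_le.1 fun hNc => hc ?_⟩
  refine correctedWeight_eq_zero_of_one_le φ ?_
  calc (1 : ℝ) ≤ N * ε := hεN.le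
    _ ≤ c.length * shortWeightSum φ c.length ω := by
      gcongr
      exact hωε.le.trans (tupleWeight_le_shortWeightSum φ (hc₀N.trans_le hNc) ω)

/-- A tuple of minimal length among those of positive weight keeps all its weight. -/
theorem exists_correctedWeight_pos (ω : C(I, B)) : ∃ c, 0 < correctedWeight φ c ω := by
  classical
  have hex : ∃ n, ∃ c : List ι, c.length = n ∧ 0 < tupleWeight φ c ω :=
    let ⟨c, hc⟩ := exists_tupleWeight_pos φ ω
    ⟨_, c, rfl, hc⟩
  obtain ⟨c, hlen, hc⟩ : ∃ c : List ι, c.length = Nat.find hex ∧ 0 < tupleWeight φ c ω :=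
    Nat.find_spec hex
  have hshort : shortWeightSum φ c.length ω = 0 := by
    refine finsum_eq_zero_of_forall_eq_zero fun c' => ?_
    refine ((tupleWeight_nonneg φ c' ω).eq_or_lt).elim Eq.symm fun hpos => ?_
    have := Nat.find_min' hex ⟨c', rfl, hpos⟩
    have := c'.2
    omega
  exact ⟨c, by simpa [correctedWeight_apply, hshort] using hc⟩

def pathPartition : PartitionOfUnity (List ι) C(I, B) :=
  PartitionOfUnity.normalize (correctedWeight φ) (locallyFinite_correctedWeight φ)
    (correctedWeight_nonneg φ) (exists_correctedWeight_pos φ)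

theorem pathPartition_isSubordinate :
    (pathPartition φ).IsSubordinate (tupleControlled fun i => tsupport (φ i)) := by
  intro c
  rw [tsupport, pathPartition, PartitionOfUnity.support_normalize]
  refine closure_minimal ?_ (isClosed_tupleControlled (fun i => isClosed_tsupport _) c)
  refine (support_correctedWeight_subset φ c).trans ?_
  rw [support_tupleWeight]
  exact fun ω hω => ⟨hω.1, hω.2.mono fun i => subset_tsupport _⟩

end pathPartition

section glue

variable {κ : Type*} {p : C(E, B)} (μ : PartitionOfUnity κ C(I, B)) {W : κ → Set C(I, B)}
  (Λ : ∀ c, WindowLift p (W c))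

def listMass (l : List κ) (ω : C(I, B)) : ℝ := (l.map (μ · ω)).sum

theorem listMass_cons (c : κ) (l : List κ) (ω : C(I, B)) :
    listMass μ (c :: l) ω = μ c ω + listMass μ l ω := rfl

theorem listMass_nonneg (l : List κ) (ω : C(I, B)) : 0 ≤ listMass μ l ω :=
  List.sum_nonneg fun _ hx => by
    obtain ⟨c, -, rfl⟩ := List.mem_map.1 hx
    exact μ.nonneg c ω

theorem continuous_listMass (l : List κ) : Continuous (listMass μ l) :=
  continuous_list_sum _ fun c _ => (μ c).continuous

theorem listMass_filter (l : List κ) (ω : C(I, B)) :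
    listMass μ (l.filter (μ · ω ≠ 0)) ω = listMass μ l ω := by
  induction l with
  | nil => rfl
  | cons c l ih =>
    by_cases hc : μ c ω = 0
    · rw [List.filter_cons_of_neg (by simpa using hc), ih, listMass_cons, hc, zero_add]
    · rw [List.filter_cons_of_pos (by simpa using hc), listMass_cons, listMass_cons, ih]

/-- For `z = (x₀, ω, v)`: the window of `c` after those of `l`, cut off at time `v`, with the
lift starting at `x`. -/
def massWindow (c : κ) (l : List κ) (x : E) (z : E × C(I, B) × ℝ) : E × C(I, B) × ℝ × ℝ :=
  (x, z.2.1, listMass μ l z.2.1, min z.2.2 (listMass μ (c :: l) z.2.1))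

def liftAlong : List κ → E × C(I, B) × ℝ → E
  | [], z => z.1
  | c :: l, z => (Λ c).lift (massWindow μ c l (liftAlong l z) z)

def pathDomain (p : C(E, B)) : Set (E × C(I, B) × ℝ) :=
  {z | p z.1 = z.2.1 0 ∧ 0 ≤ z.2.2 ∧ z.2.2 ≤ 1}

variable {c : κ} {l : List κ} {z : E × C(I, B) × ℝ}

theorem liftAlong_cons_of_le (h : min z.2.2 (listMass μ (c :: l) z.2.1) ≤ listMass μ l z.2.1) :
    liftAlong μ Λ (c :: l) z = liftAlong μ Λ l z :=
  (Λ c).lift_of_le _ h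

theorem liftAlong_cons_of_eq_zero (hc : μ c z.2.1 = 0) :
    liftAlong μ Λ (c :: l) z = liftAlong μ Λ l z :=
  liftAlong_cons_of_le μ Λ (by rw [listMass_cons, hc, zero_add]; exact min_le_right _ _)

theorem liftAlong_cons_of_le_listMass (hv : z.2.2 ≤ listMass μ l z.2.1) :
    liftAlong μ Λ (c :: l) z = liftAlong μ Λ l z :=
  liftAlong_cons_of_le μ Λ ((min_le_left _ _).trans hv)

theorem liftAlong_of_nonpos (hv : z.2.2 ≤ 0) : ∀ l : List κ, liftAlong μ Λ l z = z.1
  | [] => rfl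
  | c :: l => by
    rw [liftAlong_cons_of_le_listMass μ Λ (hv.trans (listMass_nonneg μ l z.2.1))]
    exact liftAlong_of_nonpos hv l

theorem liftAlong_filter (z : E × C(I, B) × ℝ) :
    ∀ l : List κ, liftAlong μ Λ (l.filter (μ · z.2.1 ≠ 0)) z = liftAlong μ Λ l z
  | [] => rfl
  | c :: l => by
    by_cases hc : μ c z.2.1 = 0
    · rw [List.filter_cons_of_neg (by simpa using hc), liftAlong_cons_of_eq_zero μ Λ hc]
      exact liftAlong_filter z l
    · rw [List.filter_cons_of_pos (by simpa using hc), liftAlong, liftAlong,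
        liftAlong_filter z l, massWindow, massWindow, listMass_cons, listMass_cons,
        listMass_filter]

theorem mem_windowDomain (hz : z ∈ pathDomain p) (hW : z.2.1 ∈ W c)
    (hproj : p (liftAlong μ Λ l z) = z.2.1 (projI (listMass μ l z.2.1))) :
    massWindow μ c l (liftAlong μ Λ l z) z ∈ windowDomain p (W c) :=
  ⟨hW, listMass_nonneg μ l z.2.1, (min_le_left _ _).trans hz.2.2, hproj⟩

theorem sort_finsupport_eq_filter [LinearOrder κ] {ω : C(I, B)} {J : Finset κ}
    (hJ : support (μ · ω) ⊆ J) :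
    (μ.finsupport ω).sort (· ≤ ·) = (J.sort (· ≤ ·)).filter (μ · ω ≠ 0) := by
  classical
  refine List.Perm.eq_of_pairwise' (Finset.pairwise_sort _ _) ((Finset.pairwise_sort _ _).filter _)
    (List.perm_of_nodup_nodup_toFinset_eq (Finset.sort_nodup _ _)
      ((Finset.sort_nodup _ _).filter _) ?_)
  ext c
  simp only [List.mem_toFinset, Finset.mem_sort, PartitionOfUnity.mem_finsupport, List.mem_filter,
    decide_eq_true_eq]
  exact ⟨fun h => ⟨hJ h, h⟩, fun h => h.2⟩

/-- Sorting makes the active indices near a path a sublist of one fixed list, which is what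
makes this continuous. -/
def globalLift [LinearOrder κ] (z : E × C(I, B) × ℝ) : E :=
  liftAlong μ Λ ((μ.finsupport z.2.1).sort (· ≤ ·)) z

theorem globalLift_of_nonpos [LinearOrder κ] (hv : z.2.2 ≤ 0) : globalLift μ Λ z = z.1 :=
  liftAlong_of_nonpos μ Λ hv _

theorem continuousWithinAt_liftAlong_cons_of_inactive {z₀ : E × C(I, B) × ℝ}
    (ih : ContinuousWithinAt (liftAlong μ Λ l) (pathDomain p) z₀) :
    ContinuousWithinAt (liftAlong μ Λ (c :: l))
      (pathDomain p ∩ {z | μ c z.2.1 = 0 ∨ z.2.2 ≤ listMass μ l z.2.1}) z₀ := by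
  have hω : Continuous fun z : E × C(I, B) × ℝ => z.2.1 := by fun_prop
  have hC : IsClosed {z : E × C(I, B) × ℝ | μ c z.2.1 = 0 ∨ z.2.2 ≤ listMass μ l z.2.1} :=
    (isClosed_eq ((μ c).continuous.comp hω) continuous_const).union
      (isClosed_le (by fun_prop) ((continuous_listMass μ l).comp hω))
  have hskip : ∀ z ∈ {z : E × C(I, B) × ℝ | μ c z.2.1 = 0 ∨ z.2.2 ≤ listMass μ l z.2.1},
      liftAlong μ Λ (c :: l) z = liftAlong μ Λ l z := fun z hz =>
    hz.elim (liftAlong_cons_of_eq_zero μ Λ) (liftAlong_cons_of_le_listMass μ Λ)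
  exact continuousWithinAt_of_subset_isClosed hC inter_subset_right fun h =>
    (ih.mono inter_subset_left).congr (fun z hz => hskip z hz.2) (hskip z₀ h)

variable (hμ : μ.IsSubordinate W)
include hμ

theorem proj_liftAlong (hz : z ∈ pathDomain p) :
    ∀ l : List κ, l.Nodup →
      p (liftAlong μ Λ l z) = z.2.1 (projI (min z.2.2 (listMass μ l z.2.1)))
  | [], _ => by simpa [liftAlong, listMass, hz.2.1] using hz.1
  | c :: l, hcl => by
    have ih := proj_liftAlong hz l (List.nodup_cons.1 hcl).2
    set a := listMass μ l z.2.1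
    by_cases hle : min z.2.2 (listMass μ (c :: l) z.2.1) ≤ a
    · rw [liftAlong_cons_of_le μ Λ hle, ih, listMass_cons]
      congr 2
      have := μ.nonneg c z.2.1
      rw [listMass_cons] at hle
      simp only [min_def] at hle ⊢
      split_ifs at hle ⊢ <;> linarith
    · rw [not_le] at hle
      have hav : a ≤ z.2.2 := hle.le.trans (min_le_left _ _)
      have hc : μ c z.2.1 ≠ 0 := fun h0 => by
        rw [listMass_cons, h0, zero_add] at hle
        exact (min_le_right _ _).not_gt hle
      rw [liftAlong, (Λ c).proj_lift _ (mem_windowDomain μ Λ hz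
        (hμ c (subset_tsupport _ hc)) (by rw [ih, min_eq_right hav]))]
      exact congrArg (z.2.1 ∘ projI) (max_eq_right hle.le)

theorem continuousWithinAt_liftAlong_cons_of_mem (hl : l.Nodup) {z₀ : E × C(I, B) × ℝ}
    (ih : ContinuousWithinAt (liftAlong μ Λ l) (pathDomain p) z₀) (hz₀ : z₀ ∈ pathDomain p)
    (hW₀ : z₀.2.1 ∈ W c) (hv₀ : listMass μ l z₀.2.1 ≤ z₀.2.2) :
    ContinuousWithinAt (liftAlong μ Λ (c :: l))
      (pathDomain p ∩ {z | z.2.1 ∈ W c ∧ listMass μ l z.2.1 ≤ z.2.2}) z₀ := by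
  have hmem : ∀ z ∈ pathDomain p, z.2.1 ∈ W c → listMass μ l z.2.1 ≤ z.2.2 →
      massWindow μ c l (liftAlong μ Λ l z) z ∈ windowDomain p (W c) := fun z hz hW hv =>
    mem_windowDomain μ Λ hz hW (by rw [proj_liftAlong μ Λ hμ hz l hl, min_eq_right hv])
  have hwindow : ContinuousWithinAt (fun z => massWindow μ c l (liftAlong μ Λ l z) z)
      (pathDomain p ∩ {z | z.2.1 ∈ W c ∧ listMass μ l z.2.1 ≤ z.2.2}) z₀ := by
    refine (ih.mono inter_subset_left).prodMk (Continuous.continuousWithinAt ?_)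
    have := continuous_listMass μ l
    have := continuous_listMass μ (c :: l)
    fun_prop
  exact ((Λ c).continuousOn_lift _ (hmem z₀ hz₀ hW₀ hv₀)).comp
    (f := fun z => massWindow μ c l (liftAlong μ Λ l z) z) hwindow
    fun z hz => hmem z hz.1 hz.2.1 hz.2.2

theorem continuousWithinAt_liftAlong_cons (hl : l.Nodup) {z₀ : E × C(I, B) × ℝ}
    (ih : ContinuousWithinAt (liftAlong μ Λ l) (pathDomain p) z₀) (hz₀ : z₀ ∈ pathDomain p) :
    ContinuousWithinAt (liftAlong μ Λ (c :: l)) (pathDomain p) z₀ := by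
  have hω : Continuous fun z : E × C(I, B) × ℝ => z.2.1 := by fun_prop
  by_cases h₀ : z₀.2.1 ∈ tsupport (μ c)
  · have hcover : pathDomain p ⊆
        (pathDomain p ∩ {z | μ c z.2.1 = 0 ∨ z.2.2 ≤ listMass μ l z.2.1}) ∪
          (pathDomain p ∩ {z | z.2.1 ∈ W c ∧ listMass μ l z.2.1 ≤ z.2.2}) := by
      intro z hz
      by_cases hc : μ c z.2.1 = 0
      · exact Or.inl ⟨hz, Or.inl hc⟩
      rcases le_total z.2.2 (listMass μ l z.2.1) with hv | hv
      · exact Or.inl ⟨hz, Or.inr hv⟩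
      · exact Or.inr ⟨hz, hμ c (subset_tsupport _ hc), hv⟩
    refine (ContinuousWithinAt.union ?_ ?_).mono hcover
    · exact continuousWithinAt_liftAlong_cons_of_inactive μ Λ ih
    · exact continuousWithinAt_of_subset_isClosed
        (isClosed_le ((continuous_listMass μ l).comp hω) (by fun_prop)) (fun z hz => hz.2.2)
        fun h => continuousWithinAt_liftAlong_cons_of_mem μ Λ hμ hl ih hz₀ (hμ c h₀) h
  · have hev : ∀ᶠ z in 𝓝 z₀, μ c z.2.1 = 0 :=
      hω.continuousAt.eventually (notMem_tsupport_iff_eventuallyEq.1 h₀)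
    exact ih.congr_of_eventuallyEq
      (eventually_nhdsWithin_of_eventually_nhds (hev.mono fun z => liftAlong_cons_of_eq_zero μ Λ))
      (liftAlong_cons_of_eq_zero μ Λ (image_eq_zero_of_notMem_tsupport h₀))

theorem continuousWithinAt_liftAlong {z₀ : E × C(I, B) × ℝ} (hz₀ : z₀ ∈ pathDomain p) :
    ∀ l : List κ, l.Nodup → ContinuousWithinAt (liftAlong μ Λ l) (pathDomain p) z₀
  | [], _ => continuous_fst.continuousWithinAt
  | _ :: l, hcl => continuousWithinAt_liftAlong_cons μ Λ hμ (List.nodup_cons.1 hcl).2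
      (continuousWithinAt_liftAlong hz₀ l (List.nodup_cons.1 hcl).2) hz₀

theorem proj_globalLift [LinearOrder κ] (hz : z ∈ pathDomain p) :
    p (globalLift μ Λ z) = z.2.1 (projI z.2.2) := by
  classical
  rw [globalLift, proj_liftAlong μ Λ hμ hz _ (Finset.sort_nodup _ _), listMass,
    ← List.sum_toFinset _ (Finset.sort_nodup _ _), Finset.sort_toFinset,
    μ.sum_finsupport (mem_univ _), min_eq_left hz.2.2]

theorem continuousOn_globalLift [LinearOrder κ] :
    ContinuousOn (globalLift μ Λ) (pathDomain p) := by
  intro z₀ hz₀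
  obtain ⟨J, hJ⟩ := μ.locallyFinite.exists_finset_support z₀.2.1
  have hev : ∀ᶠ z in 𝓝 z₀, globalLift μ Λ z = liftAlong μ Λ (J.sort (· ≤ ·)) z :=
    ((continuous_fst.comp continuous_snd).continuousAt.eventually hJ).mono fun z hz => by
      rw [globalLift, sort_finsupport_eq_filter μ (ω := z.2.1) hz, liftAlong_filter]
  exact (continuousWithinAt_liftAlong μ Λ hμ hz₀ _ (Finset.sort_nodup _ _)).congr_of_eventuallyEq
    (eventually_nhdsWithin_of_eventually_nhds hev) hev.self_of_nhds

end glue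

theorem isHurewiczFibration_of_windowLift {κ : Type*} {p : C(E, B)}
    (μ : PartitionOfUnity κ C(I, B)) {W : κ → Set C(I, B)} (hμ : μ.IsSubordinate W)
    (Λ : ∀ c, WindowLift p (W c)) : IsHurewiczFibration p := by
  let : LinearOrder κ := IsWellOrder.linearOrder WellOrderingRel
  intro A _ H g hg
  have hθ : ∀ q : A × I, (g q.1, H.curry q.1, (q.2 : ℝ)) ∈ pathDomain p := fun q =>
    ⟨hg q.1, q.2.2.1, q.2.2.2⟩
  refine ⟨⟨fun q => globalLift μ Λ (g q.1, H.curry q.1, q.2),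
    (continuousOn_globalLift μ Λ hμ).comp_continuous (by fun_prop) hθ⟩,
    fun a => globalLift_of_nonpos μ Λ le_rfl, fun q => ?_⟩
  simp [proj_globalLift μ Λ hμ (hθ q)]

end HomotopyLifting

end

/-- A locally trivial fibration over a paracompact (Hausdorff) base is a Hurewicz
fibration: it has the homotopy lifting property with respect to all topological
spaces. -/
theorem hurewicz_of_locallyTrivial_paracompact
    {E B : Type u} [TopologicalSpace E] [TopologicalSpace B]
    [ParacompactSpace B] [T2Space B] (p : C(E, B))
    (hloc : ∀ x : B, ∃ U : Set B, IsOpen U ∧ x ∈ U ∧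
      ∃ (F : TopCat.{u}) (e : {y : E // p y ∈ U} ≃ₜ U × F),
        ∀ y : {y : E // p y ∈ U}, ((e y).1 : B) = p y.1) :
    Paper.IsHurewiczFibration ⇑p := by
  choose U hUo hxU F e he using hloc
  obtain ⟨φ, hφ⟩ := PartitionOfUnity.exists_isSubordinate isClosed_univ U hUo
    fun x _ => mem_iUnion.2 ⟨x, hxU x⟩
  exact HomotopyLifting.isHurewiczFibration_of_windowLift (HomotopyLifting.pathPartition φ)
    (HomotopyLifting.pathPartition_isSubordinate φ)
    (HomotopyLifting.WindowLift.ofTuple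
      (fun x => HomotopyLifting.LiftingFunctionOn.ofTrivialization (e x) (he x))
      (fun _ => isClosed_tsupport _) hφ)
end

section
/- Let W be a topological space and consider a cospan X → Z ← Y in the category of spaces over W, where the structure maps Y → W and Z → W are Hurewicz fibrations. Then the inclusion of the fiberwise homotopy pullback (triples (x,p,y) where the path p in Z lies over a constant path in W) into the ordinary homotopy pullback (all triples (x,p,y)) is a weak homotopy equivalence. -/
open ContinuousMap Topology unitInterval

universe u

open Paper unitInterval

/-!
A cube `(I^n, ∂I^n) → (E, F)` in the homotopy pullback `E` with boundary in the fiberwise part `F`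
deforms into `F` relative to its boundary; for the dimensions `0, 1` and `n, n + 1` this gives
bijectivity on `π₀` and on `πₙ`. To deform a cube of triples `(x_b, p_b, y_b)`, first lift the
reversed path `pZ ∘ p_b` through `Y → W`, which moves `y_b` over `pZ (f x_b)`; then lift through
`Z → W` the contraction of the paths `pZ ∘ p_b` to their start point, the end points following the
moved `y_b`. Both lifts have to be stationary over `∂I^n`: this is homotopy lifting relative to the
boundary of a cube, which reduces to the absolute one because the pair
`(I^N × I, I^N × 0 ∪ ∂I^N × I)` is homeomorphic to `(I^N × I, I^N × 0)`.
-/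

namespace unitInterval

lemma abs_two_mul_sub_one_le (t : I) : |2 * (t : ℝ) - 1| ≤ 1 := by
  rw [abs_le]; constructor <;> linarith [t.2.1, t.2.2]

lemma abs_two_mul_sub_one_eq_one_iff (t : I) : |2 * (t : ℝ) - 1| = 1 ↔ t = 0 ∨ t = 1 := by
  rw [abs_eq zero_le_one, Subtype.ext_iff, Subtype.ext_iff]
  constructor <;> rintro (h | h) <;> simp only [Set.Icc.coe_zero, Set.Icc.coe_one] at * <;>
    first | (right; linarith) | (left; linarith)

end unitInterval

namespace Cube

variable {N : Type}

/-- The homothety of ratio `a` about the centre of the cube (clamped to stay in the cube). -/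
noncomputable def scale (a : ℝ) (x : N → I) : N → I :=
  fun i => Set.projIcc 0 1 zero_le_one ((1 + a * (2 * (x i : ℝ) - 1)) / 2)

lemma continuous_scale : Continuous fun p : ℝ × (N → I) => scale p.1 p.2 :=
  continuous_pi fun i => continuous_projIcc.comp <|
    (continuous_const.add <| continuous_fst.mul <| (continuous_const.mul <|
      continuous_subtype_val.comp <| (continuous_apply i).comp continuous_snd).sub
        continuous_const).div_const 2

lemma continuous_scale_comp {a : (N → I) × I → ℝ} (ha : Continuous a) :
    Continuous fun q => scale (a q) q.1 :=
  continuous_scale.comp (ha.prodMk continuous_fst)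

lemma continuous_coe_snd : Continuous fun q : (N → I) × I => (q.2 : ℝ) :=
  continuous_subtype_val.comp continuous_snd

def openBox (N : Type) : Set ((N → I) × I) := {q | q.2 = 0 ∨ q.1 ∈ boundary N}

lemma mem_boundary_succ_iff {n : ℕ} {c : Fin (n + 1) → I} :
    c ∈ boundary (Fin (n + 1)) ↔
      (c (Fin.last n) = 0 ∨ c (Fin.last n) = 1) ∨ Fin.init c ∈ boundary (Fin n) := by
  constructor
  · rintro ⟨i, hi⟩
    induction i using Fin.lastCases with
    | last => exact Or.inl hi
    | cast j => exact Or.inr ⟨j, hi⟩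
  · rintro (h | ⟨j, hj⟩)
    exacts [⟨Fin.last n, h⟩, ⟨j.castSucc, hj⟩]

lemma snoc_mem_boundary_iff {n : ℕ} {b : Fin n → I} {t : I} :
    (Fin.snoc b t : Fin (n + 1) → I) ∈ boundary (Fin (n + 1)) ↔
      (t = 0 ∨ t = 1) ∨ b ∈ boundary (Fin n) := by
  rw [mem_boundary_succ_iff, Fin.snoc_last, Fin.init_snoc]

variable [Fintype N]

def radius (x : N → I) : ℝ := ‖fun i => 2 * (x i : ℝ) - 1‖

lemma abs_two_mul_sub_one_le_radius (x : N → I) (i : N) : |2 * (x i : ℝ) - 1| ≤ radius x :=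
  norm_le_pi_norm (fun i => 2 * (x i : ℝ) - 1) i

lemma radius_le_one (x : N → I) : radius x ≤ 1 :=
  (pi_norm_le_iff_of_nonneg zero_le_one).2 fun i => abs_two_mul_sub_one_le (x i)

lemma continuous_radius : Continuous (radius (N := N)) :=
  continuous_norm.comp <| continuous_pi fun i =>
    (continuous_const.mul (continuous_subtype_val.comp (continuous_apply i))).sub continuous_const

lemma continuous_radius_fst : Continuous fun q : (N → I) × I => radius q.1 :=
  continuous_radius.comp continuous_fst

lemma mem_boundary_iff_radius_eq_one (x : N → I) : x ∈ boundary N ↔ radius x = 1 := by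
  constructor
  · rintro ⟨i, hi⟩
    refine le_antisymm (radius_le_one x) ?_
    rw [← (abs_two_mul_sub_one_eq_one_iff (x i)).2 hi]
    exact abs_two_mul_sub_one_le_radius x i
  · intro h
    by_contra hx
    have hlt : ∀ i, ‖2 * (x i : ℝ) - 1‖ < 1 := fun i =>
      lt_of_le_of_ne (abs_two_mul_sub_one_le (x i))
        fun h1 => hx ⟨i, (abs_two_mul_sub_one_eq_one_iff (x i)).1 h1⟩
    exact (pi_norm_lt_iff zero_lt_one).2 hlt |>.ne h

lemma isClosed_boundary : IsClosed (boundary N) := by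
  rw [show boundary N = radius ⁻¹' {1} from Set.ext mem_boundary_iff_radius_eq_one]
  exact isClosed_singleton.preimage continuous_radius

def openBoxExceptEnd (n : ℕ) : Set ((Fin (n + 1) → I) × I) :=
  {q | q.2 = 0 ∨ q.1 (Fin.last n) = 0 ∨ Fin.init q.1 ∈ boundary (Fin n)}

lemma openBoxExceptEnd_subset_openBox {n : ℕ} : openBoxExceptEnd n ⊆ openBox (Fin (n + 1)) := by
  rintro q (h0 | h0 | hb)
  exacts [Or.inl h0, Or.inr (mem_boundary_succ_iff.2 (Or.inl (Or.inl h0))),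
    Or.inr (mem_boundary_succ_iff.2 (Or.inr hb))]

lemma openBox_subset_union {n : ℕ} :
    openBox (Fin (n + 1)) ⊆ {q | q.1 (Fin.last n) = 1} ∪ openBoxExceptEnd n := by
  rintro q (h0 | hb)
  · exact Or.inr (Or.inl h0)
  · rcases mem_boundary_succ_iff.1 hb with (h0 | h1) | hb
    exacts [Or.inr (Or.inr (Or.inl h0)), Or.inl h1, Or.inr (Or.inr (Or.inr hb))]

lemma isClosed_openBoxExceptEnd {n : ℕ} : IsClosed (openBoxExceptEnd n) := by
  have hinit : IsClosed ((fun q : (Fin (n + 1) → I) × I => Fin.init q.1) ⁻¹' boundary (Fin n)) :=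
    isClosed_boundary.preimage continuous_fst.finInit
  exact (isClosed_eq continuous_snd continuous_const).union <|
    (isClosed_eq ((continuous_apply _).comp continuous_fst) continuous_const).union hinit

section Scale

variable {a : ℝ} {x : N → I}

lemma two_mul_scale_sub_one (ha : 0 ≤ a) (h : a * radius x ≤ 1) (i : N) :
    2 * (scale a x i : ℝ) - 1 = a * (2 * (x i : ℝ) - 1) := by
  have h1 : |a * (2 * (x i : ℝ) - 1)| ≤ 1 := by
    rw [abs_mul, abs_of_nonneg ha]
    exact (mul_le_mul_of_nonneg_left (abs_two_mul_sub_one_le_radius x i) ha).trans h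
  rw [abs_le] at h1
  rw [scale, Set.projIcc_of_mem _ ⟨by linarith, by linarith⟩]
  ring

lemma radius_scale (ha : 0 ≤ a) (h : a * radius x ≤ 1) : radius (scale a x) = a * radius x := by
  have : (fun i => 2 * (scale a x i : ℝ) - 1) = a • fun i => 2 * (x i : ℝ) - 1 :=
    funext (two_mul_scale_sub_one ha h)
  rw [radius, this, norm_smul, Real.norm_of_nonneg ha, radius]

lemma scale_scale_of_mul_eq_one {c : ℝ} (ha : 0 ≤ a) (h : a * radius x ≤ 1)
    (hca : c * a = 1) : scale c (scale a x) = x := by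
  funext i
  rw [scale, two_mul_scale_sub_one ha h, ← mul_assoc, hca, one_mul,
    show (1 + (2 * (x i : ℝ) - 1)) / 2 = x i by ring, Set.projIcc_val]

end Scale

/- In the coordinates `(m, t) = (radius x, height)` of the square `[0,1]²`, `fromOpenBox` is
`(m, t) ↦ ((1 + t) / 2, 2 - 2m)` where `2 - 2m ≤ t` and `(m, t) ↦ (m (1 + t) / (2 - t), t)`
elsewhere: it unfolds the open box `{t = 0} ∪ {m = 1}` onto the bottom `{t = 0}`, and `toOpenBox`
is its inverse. -/

noncomputable def toOpenBox (q : (N → I) × I) : (N → I) × I :=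
  if (q.2 : ℝ) ≤ 2 * radius q.1 - 1 then
    (scale ((2 - q.2) / (2 * max (radius q.1) (1 / 2))) q.1,
      Set.projIcc 0 1 zero_le_one (2 * radius q.1 - 1))
  else (scale ((2 - q.2) / (1 + q.2)) q.1, q.2)

noncomputable def fromOpenBox (q : (N → I) × I) : (N → I) × I :=
  if 2 - 2 * radius q.1 ≤ (q.2 : ℝ) then
    (scale ((1 + q.2) / (2 * max (radius q.1) (1 / 2))) q.1,
      Set.projIcc 0 1 zero_le_one (2 - 2 * radius q.1))
  else (scale ((1 + q.2) / (2 - q.2)) q.1, q.2)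

lemma continuous_toOpenBox : Continuous (toOpenBox (N := N)) := by
  refine Continuous.if_le ?_ ?_ continuous_coe_snd
    ((continuous_const.mul continuous_radius_fst).sub continuous_const) ?_
  · refine (continuous_scale_comp ?_).prodMk
      (continuous_projIcc.comp ((continuous_const.mul continuous_radius_fst).sub continuous_const))
    exact (continuous_const.sub continuous_coe_snd).div
      (continuous_const.mul (continuous_radius_fst.max continuous_const)) fun q => by positivity
  · refine (continuous_scale_comp ?_).prodMk continuous_snd
    exact (continuous_const.sub continuous_coe_snd).div (continuous_const.add continuous_coe_snd)
      fun q => by linarith [q.2.2.1]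
  · intro q hq
    have hmax : max (radius q.1) (1 / 2) = radius q.1 := max_eq_left (by linarith [q.2.2.1])
    rw [hmax, ← hq, Set.projIcc_val]
    congr 3
    linarith

lemma continuous_fromOpenBox : Continuous (fromOpenBox (N := N)) := by
  refine Continuous.if_le ?_ ?_ (continuous_const.sub (continuous_const.mul continuous_radius_fst))
    continuous_coe_snd ?_
  · refine (continuous_scale_comp ?_).prodMk
      (continuous_projIcc.comp (continuous_const.sub (continuous_const.mul continuous_radius_fst)))
    exact (continuous_const.add continuous_coe_snd).div
      (continuous_const.mul (continuous_radius_fst.max continuous_const)) fun q => by positivity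
  · refine (continuous_scale_comp ?_).prodMk continuous_snd
    exact (continuous_const.add continuous_coe_snd).div (continuous_const.sub continuous_coe_snd)
      fun q => by linarith [q.2.2.2]
  · intro q hq
    have hmax : max (radius q.1) (1 / 2) = radius q.1 := max_eq_left (by linarith [q.2.2.2])
    rw [hmax, hq, Set.projIcc_val]
    congr 3
    linarith

lemma toOpenBox_mk_zero_mem_openBox (x : N → I) : toOpenBox (x, 0) ∈ openBox N := by
  unfold toOpenBox
  split_ifs with h
  · right
    simp only [Set.Icc.coe_zero, sub_zero] at h ⊢
    have hm : 1 / 2 ≤ radius x := by linarith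
    have hfactor : 2 / (2 * max (radius x) (1 / 2)) * radius x = 1 := by
      rw [max_eq_left hm]; field_simp
    rw [mem_boundary_iff_radius_eq_one, radius_scale (by positivity) hfactor.le, hfactor]
  · exact Or.inl rfl

lemma fromOpenBox_snd_eq_zero {q : (N → I) × I} (hq : q ∈ openBox N) :
    (fromOpenBox q).2 = 0 := by
  unfold fromOpenBox
  have hm : radius q.1 ≤ 1 := radius_le_one q.1
  rcases hq with ht | hb
  · split_ifs with h
    · rw [ht, Set.Icc.coe_zero] at h
      exact Set.projIcc_of_le_left zero_le_one (by linarith)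
    · exact ht
  · rw [mem_boundary_iff_radius_eq_one] at hb
    rw [if_pos (by rw [hb]; linarith [q.2.2.1])]
    exact Set.projIcc_of_le_left zero_le_one (by rw [hb]; norm_num)

lemma toOpenBox_fromOpenBox (q : (N → I) × I) : toOpenBox (fromOpenBox q) = q := by
  obtain ⟨x, t⟩ := q
  have ht0 : 0 ≤ (t : ℝ) := t.2.1
  have ht1 : (t : ℝ) ≤ 1 := t.2.2
  have hm1 : radius x ≤ 1 := radius_le_one x
  unfold fromOpenBox
  dsimp only
  split_ifs with h
  · have hm : 1 / 2 ≤ radius x := by linarith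
    have hm0 : 0 < radius x := by linarith
    set a := (1 + (t : ℝ)) / (2 * radius x) with ha
    have ham : a * radius x = (1 + t) / 2 := by rw [ha]; field_simp
    have hτ : ((Set.projIcc 0 1 zero_le_one (2 - 2 * radius x) : I) : ℝ) = 2 - 2 * radius x :=
      congrArg Subtype.val (Set.projIcc_of_mem _ ⟨by linarith, by linarith⟩)
    have hr : radius (scale a x) = (1 + t) / 2 := by
      rw [radius_scale (by positivity) (by linarith), ham]
    rw [max_eq_left hm, toOpenBox, if_pos (by simp only [hτ]; linarith), hr, hτ,
      max_eq_left (by linarith), show 2 * ((1 + (t : ℝ)) / 2) - 1 = t by ring, Set.projIcc_val]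
    congr 1
    refine scale_scale_of_mul_eq_one (by positivity) (by linarith) ?_
    field_simp
    ring
  · have h2t : 0 < 2 - (t : ℝ) := by linarith
    set a := (1 + (t : ℝ)) / (2 - t) with ha
    have ha0 : 0 ≤ a := div_nonneg (by linarith) h2t.le
    have ham : a * radius x < (1 + t) / 2 := by
      rw [ha, div_mul_eq_mul_div, div_lt_iff₀ (by linarith)]; nlinarith
    have hr : radius (scale a x) = a * radius x := radius_scale ha0 (by linarith)
    rw [toOpenBox, if_neg (by simp only [hr]; linarith)]
    congr 1
    refine scale_scale_of_mul_eq_one ha0 (by linarith) ?_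
    rw [ha]
    field_simp

end Cube

universe v w

open Cube in
theorem Paper.IsHurewiczFibration.exists_lift_rel_openBox {E B : Type*} [TopologicalSpace E]
    [TopologicalSpace B] {p : E → B} (hp : IsHurewiczFibration.{v} p) {N : Type} [Fintype N]
    (H : C((N → I) × I, B)) (V : (N → I) × I → E) (hV : ContinuousOn V (openBox N))
    (hVH : ∀ q ∈ openBox N, p (V q) = H q) :
    ∃ G : C((N → I) × I, E), (∀ q, p (G q) = H q) ∧ ∀ q ∈ openBox N, G q = V q := by
  let down : C(ULift.{v} (N → I) × I, (N → I) × I) :=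
    ⟨fun q => (q.1.down, q.2), (continuous_uliftDown.comp continuous_fst).prodMk continuous_snd⟩
  let up : C((N → I) × I, ULift.{v} (N → I) × I) :=
    ⟨fun q => (ULift.up q.1, q.2), (continuous_uliftUp.comp continuous_fst).prodMk continuous_snd⟩
  have hdown_up : ∀ q, down (up q) = q := fun _ => rfl
  let toBox : C((N → I) × I, (N → I) × I) := ⟨toOpenBox, continuous_toOpenBox⟩
  let fromBox : C((N → I) × I, (N → I) × I) := ⟨fromOpenBox, continuous_fromOpenBox⟩
  let start : C(ULift.{v} (N → I), E) :=
    ⟨fun x => V (toOpenBox (x.down, 0)), hV.comp_continuous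
      (continuous_toOpenBox.comp (continuous_uliftDown.prodMk continuous_const))
      fun x => toOpenBox_mk_zero_mem_openBox x.down⟩
  obtain ⟨G, hG0, hGH⟩ := hp _ (H.comp (toBox.comp down)) start
    fun x => hVH _ (toOpenBox_mk_zero_mem_openBox x.down)
  refine ⟨G.comp (up.comp fromBox), fun q => ?_, fun q hq => ?_⟩
  · simp only [ContinuousMap.comp_apply, hGH, hdown_up]
    exact congrArg H (toOpenBox_fromOpenBox q)
  · obtain ⟨y, hy⟩ : ∃ y, fromOpenBox q = (y, 0) :=
      ⟨_, Prod.ext rfl (fromOpenBox_snd_eq_zero hq)⟩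
    calc G (up (fromOpenBox q)) = G (ULift.up y, 0) := by rw [hy]; rfl
      _ = V (toOpenBox (y, 0)) := hG0 _
      _ = V q := by rw [← hy, toOpenBox_fromOpenBox]

section Compression

variable {E : Type*} [TopologicalSpace E] {P : E → Prop}

/-- The relative homotopy groups of the pair `(E, {e | P e})` vanish, in the form of the
compression criterion. -/
def CubesCompressible (P : E → Prop) : Prop :=
  ∀ (n : ℕ) (γ : C(Fin n → I, E)), (∀ b ∈ Cube.boundary (Fin n), P (γ b)) →
    ∃ Γ : C((Fin n → I) × I, E), (∀ b, Γ (b, 0) = γ b) ∧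
      (∀ b ∈ Cube.boundary (Fin n), ∀ s, Γ (b, s) = γ b) ∧ ∀ b, P (Γ (b, 1))

namespace CubesCompressible

def top {n : ℕ} (Γ : C((Fin n → I) × I, E)) (hΓ : ∀ b, P (Γ (b, 1))) :
    C(Fin n → I, {e // P e}) :=
  ⟨fun b => ⟨Γ (b, 1), hΓ b⟩,
    (Γ.continuous.comp (continuous_id.prodMk continuous_const)).subtype_mk _⟩

lemma surjective_pi0Map (h : CubesCompressible P) :
    Function.Surjective (pi0Map ⟨Subtype.val, continuous_subtype_val (p := P)⟩) := by
  rintro ⟨e⟩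
  obtain ⟨Γ, hΓ0, -, hΓP⟩ := h 0 (.const _ e) fun _ ⟨i, _⟩ => i.elim0
  let d : Fin 0 → I := isEmptyElim
  refine ⟨⟦⟨Γ (d, 1), hΓP d⟩⟧, Quotient.sound ⟨Path.symm ⟨⟨fun s => Γ (d, s), ?_⟩, ?_, rfl⟩⟩⟩
  · exact Γ.continuous.comp (continuous_const.prodMk continuous_id)
  · exact hΓ0 d

lemma injective_pi0Map (h : CubesCompressible P) :
    Function.Injective (pi0Map ⟨Subtype.val, continuous_subtype_val (p := P)⟩) := by
  rintro ⟨a⟩ ⟨b⟩ hab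
  obtain ⟨γ⟩ : Joined a.1 b.1 := Quotient.exact hab
  let γ₁ : C(Fin 1 → I, E) := γ.toContinuousMap.comp ⟨fun c => c 0, continuous_apply 0⟩
  have hγ₁ : ∀ c : Fin 1 → I, (c 0 = 0 ∨ c 0 = 1) → P (γ₁ c) := by
    rintro c (hc | hc)
    · simpa [γ₁, hc] using a.2
    · simpa [γ₁, hc] using b.2
  obtain ⟨Γ, -, hΓbd, hΓP⟩ := h 1 γ₁ fun c ⟨i, hi⟩ => hγ₁ c (Subsingleton.elim i 0 ▸ hi)
  have hend : ∀ c : Fin 1 → I, (c 0 = 0 ∨ c 0 = 1) → Γ (c, 1) = γ₁ c := fun c hc =>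
    hΓbd c ⟨0, hc⟩ 1
  refine Quotient.sound ⟨⟨(top Γ hΓP).comp ⟨fun s _ => s, continuous_pi fun _ => continuous_id⟩,
    Subtype.ext ?_, Subtype.ext ?_⟩⟩
  · simpa [top, γ₁] using hend (fun _ => 0) (Or.inl rfl)
  · simpa [top, γ₁] using hend (fun _ => 1) (Or.inr rfl)

lemma surjective_piMap (h : CubesCompressible P) (n : ℕ) (x : {e // P e}) :
    Function.Surjective (piMap (Fin n) ⟨Subtype.val, continuous_subtype_val (p := P)⟩ x) := by
  rintro ⟨l⟩
  have hl : ∀ b ∈ Cube.boundary (Fin n), l.1 b = x.1 := l.2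
  obtain ⟨Γ, hΓ0, hΓbd, hΓP⟩ := h n l.1 fun b hb => hl b hb ▸ x.2
  refine ⟨⟦⟨top Γ hΓP, fun b hb => Subtype.ext ((hΓbd b hb 1).trans (hl b hb))⟩⟧,
    Quotient.sound (GenLoop.Homotopic.symm ⟨⟨⟨⟨fun p => Γ (p.2, p.1), ?_⟩, hΓ0, fun _ => rfl⟩,
      fun t b hb => hΓbd b hb t⟩⟩)⟩
  exact Γ.continuous.comp continuous_swap

lemma injective_piMap (h : CubesCompressible P) (n : ℕ) (x : {e // P e}) :
    Function.Injective (piMap (Fin n) ⟨Subtype.val, continuous_subtype_val (p := P)⟩ x) := by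
  rintro ⟨a⟩ ⟨b⟩ hab
  obtain ⟨K⟩ := Quotient.exact hab
  let γ : C(Fin (n + 1) → I, E) := ⟨fun c => K (c (Fin.last n), Fin.init c),
    K.continuous.comp ((continuous_apply _).prodMk continuous_id.finInit)⟩
  have hγ : ∀ c ∈ Cube.boundary (Fin (n + 1)), P (γ c) := by
    intro c hc
    rcases Cube.mem_boundary_succ_iff.1 hc with (h0 | h1) | hb
    · simp only [γ, ContinuousMap.coe_mk, h0, K.apply_zero]
      exact (a _).2
    · simp only [γ, ContinuousMap.coe_mk, h1, K.apply_one]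
      exact (b _).2
    · simp only [γ, ContinuousMap.coe_mk, K.eq_fst _ hb]
      exact (a _).2
  obtain ⟨Γ, -, hΓbd, hΓP⟩ := h (n + 1) γ hγ
  have hend : ∀ (y : Fin n → I) (t : I), (t = 0 ∨ t = 1) ∨ y ∈ Cube.boundary (Fin n) →
      Γ (Fin.snoc y t, 1) = K (t, y) := fun y t hyt => by
    rw [hΓbd _ (Cube.snoc_mem_boundary_iff.2 hyt)]
    simp [γ]
  refine Quotient.sound ⟨⟨⟨⟨fun p => ⟨Γ (Fin.snoc p.2 p.1, 1), hΓP _⟩, ?_⟩, fun y => ?_,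
    fun y => ?_⟩, fun t y hy => ?_⟩⟩
  · exact (Γ.continuous.comp ((continuous_snd.finSnoc continuous_fst).prodMk
      continuous_const)).subtype_mk _
  · exact Subtype.ext ((hend y 0 (Or.inl (Or.inl rfl))).trans (K.apply_zero y))
  · exact Subtype.ext ((hend y 1 (Or.inl (Or.inr rfl))).trans (K.apply_one y))
  · exact Subtype.ext ((hend y t (Or.inr hy)).trans (K.eq_fst t hy))

theorem isWeakHomotopyEquiv_subtypeVal (h : CubesCompressible P) :
    IsWeakHomotopyEquiv (Subtype.val : {e // P e} → E) :=
  ⟨continuous_subtype_val, ⟨h.injective_pi0Map, h.surjective_pi0Map⟩,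
    fun n x => ⟨h.injective_piMap n x, h.surjective_piMap n x⟩⟩

end CubesCompressible

end Compression

section HomotopyPullback

variable {W X Y Z : Type*} [TopologicalSpace W] [TopologicalSpace X] [TopologicalSpace Y]
  [TopologicalSpace Z]

open Cube

section PathsWithEnd

variable {n : ℕ} {p : C(Fin n → I, C(I, Z))} {e : C((Fin n → I) × I, Z)}

variable (p e) in
noncomputable def pathsWithEnd (q : (Fin (n + 1) → I) × I) : Z :=
  if q.1 (Fin.last n) = 1 then e (Fin.init q.1, q.2) else p (Fin.init q.1) (q.1 (Fin.last n))

lemma pathsWithEnd_of_last_eq_one {q : (Fin (n + 1) → I) × I} (h : q.1 (Fin.last n) = 1) :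
    pathsWithEnd p e q = e (Fin.init q.1, q.2) :=
  if_pos h

lemma pathsWithEnd_of_mem_openBoxExceptEnd (he0 : ∀ b, e (b, 0) = p b 1)
    (hebd : ∀ b ∈ boundary (Fin n), ∀ s, e (b, s) = p b 1) {q : (Fin (n + 1) → I) × I}
    (hq : q ∈ openBoxExceptEnd n) : pathsWithEnd p e q = p (Fin.init q.1) (q.1 (Fin.last n)) := by
  by_cases h1 : q.1 (Fin.last n) = 1
  · rw [pathsWithEnd_of_last_eq_one h1, h1]
    rcases hq with h0 | h0 | hb
    · rw [h0, he0]
    · exact absurd (h0.symm.trans h1) zero_ne_one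
    · exact hebd _ hb _
  · exact if_neg h1

lemma continuousOn_pathsWithEnd (he0 : ∀ b, e (b, 0) = p b 1)
    (hebd : ∀ b ∈ boundary (Fin n), ∀ s, e (b, s) = p b 1) :
    ContinuousOn (pathsWithEnd p e) (openBox (Fin (n + 1))) := by
  have hlast : Continuous fun q : (Fin (n + 1) → I) × I => q.1 (Fin.last n) :=
    (continuous_apply _).comp continuous_fst
  refine ContinuousOn.mono ?_ openBox_subset_union
  refine ContinuousOn.union_of_isClosed ?_ ?_ (isClosed_eq hlast continuous_const)
    isClosed_openBoxExceptEnd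
  · exact (e.continuous.comp (continuous_fst.finInit.prodMk continuous_snd)).continuousOn.congr
      fun q => pathsWithEnd_of_last_eq_one
  · exact (continuous_eval.comp ((p.continuous.comp continuous_fst.finInit).prodMk
      hlast)).continuousOn.congr fun q => pathsWithEnd_of_mem_openBoxExceptEnd he0 hebd

end PathsWithEnd

theorem Paper.IsHurewiczFibration.exists_homotopy_paths_into_fiber {pZ : C(Z, W)}
    (hpZ : IsHurewiczFibration.{v} pZ) {n : ℕ} (p : C(Fin n → I, C(I, Z)))
    (e : C((Fin n → I) × I, Z)) (he0 : ∀ b, e (b, 0) = p b 1)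
    (hebd : ∀ b ∈ boundary (Fin n), ∀ s, e (b, s) = p b 1)
    (hpbd : ∀ b ∈ boundary (Fin n), ∀ t, pZ (p b t) = pZ (p b 0))
    (he : ∀ b s, pZ (e (b, s)) = pZ (p b (σ s))) :
    ∃ P : C((Fin n → I) × I, C(I, Z)), (∀ b, P (b, 0) = p b) ∧
      (∀ b ∈ boundary (Fin n), ∀ s, P (b, s) = p b) ∧ (∀ q, P q 0 = p q.1 0) ∧
      (∀ q, P q 1 = e q) ∧ ∀ b t, pZ (P (b, 1) t) = pZ (p b 0) := by
  have hp : Continuous fun q : (Fin (n + 1) → I) × I => p (Fin.init q.1) :=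
    p.continuous.comp continuous_fst.finInit
  have hlast : Continuous fun q : (Fin (n + 1) → I) × I => q.1 (Fin.last n) :=
    (continuous_apply _).comp continuous_fst
  -- Lift, on the cylinder over the `(n+1)`-cube with coordinates `((b, t), s)`, the contraction
  -- `s ↦ pZ (p b (t * σ s))` of the paths to their start points.
  let H : C((Fin (n + 1) → I) × I, W) :=
    ⟨fun q => pZ (p (Fin.init q.1) (q.1 (Fin.last n) * σ q.2)), pZ.continuous.comp <|
      continuous_eval.comp (hp.prodMk (hlast.mul (continuous_symm.comp continuous_snd)))⟩
  have hVH : ∀ q ∈ openBox (Fin (n + 1)), pZ (pathsWithEnd p e q) = H q := by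
    intro q hq
    rcases openBox_subset_union hq with h1 | hq
    · rw [pathsWithEnd_of_last_eq_one h1, he]
      simp only [H, ContinuousMap.coe_mk, show q.1 (Fin.last n) = 1 from h1, one_mul]
    · rw [pathsWithEnd_of_mem_openBoxExceptEnd he0 hebd hq]
      simp only [H, ContinuousMap.coe_mk]
      rcases hq with h0 | h0 | hb
      · rw [h0, symm_zero, mul_one]
      · rw [h0, zero_mul]
      · rw [hpbd _ hb, hpbd _ hb (_ * _)]
  obtain ⟨G, hGH, hGV⟩ :=
    hpZ.exists_lift_rel_openBox H _ (continuousOn_pathsWithEnd he0 hebd) hVH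
  have hG : ∀ b t s, (s = 0 ∨ t = 0 ∨ b ∈ boundary (Fin n)) → G (Fin.snoc b t, s) = p b t := by
    intro b t s h
    have hq : ((Fin.snoc b t : Fin (n + 1) → I), s) ∈ openBoxExceptEnd n := by
      simpa only [openBoxExceptEnd, Set.mem_ofPred_eq, Fin.snoc_last, Fin.init_snoc] using h
    rw [hGV _ (openBoxExceptEnd_subset_openBox hq),
      pathsWithEnd_of_mem_openBoxExceptEnd he0 hebd hq]
    simp only [Fin.snoc_last, Fin.init_snoc]
  have hG1 : ∀ b s, G (Fin.snoc b 1, s) = e (b, s) := fun b s => by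
    rw [hGV _ (Or.inr (snoc_mem_boundary_iff.2 (Or.inl (Or.inr rfl)))),
      pathsWithEnd_of_last_eq_one (Fin.snoc_last (α := fun _ => I) _ _)]
    simp only [Fin.init_snoc]
  let P : C((Fin n → I) × I, C(I, Z)) := ContinuousMap.curry
    ⟨fun r => G (Fin.snoc r.1.1 r.2, r.1.2), G.continuous.comp
      (((continuous_fst.comp continuous_fst).finSnoc (A := fun _ => I) continuous_snd).prodMk
        (continuous_snd.comp continuous_fst))⟩
  refine ⟨P, fun b => ?_, fun b hb s => ?_, fun q => hG _ _ _ (Or.inr (Or.inl rfl)),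
    fun q => hG1 _ _, fun b t => ?_⟩
  · ext t
    exact hG _ _ _ (Or.inl rfl)
  · ext t
    exact hG _ _ _ (Or.inr (Or.inr hb))
  · change pZ (G (Fin.snoc b t, 1)) = _
    rw [hGH]
    simp only [H, ContinuousMap.coe_mk, Fin.snoc_last, Fin.init_snoc, symm_one, mul_zero]

abbrev HomotopyPullback (f : C(X, Z)) (g : C(Y, Z)) : Type _ :=
  {q : X × C(I, Z) × Y // q.2.1 0 = f q.1 ∧ q.2.1 1 = g q.2.2}

def HomotopyPullback.IsFiberwise {f : C(X, Z)} {g : C(Y, Z)} (pZ : C(Z, W))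
    (q : HomotopyPullback f g) : Prop :=
  ∀ t, pZ (q.1.2.1 t) = pZ (q.1.2.1 0)

theorem HomotopyPullback.cubesCompressible_isFiberwise {pY : C(Y, W)} {pZ : C(Z, W)}
    {f : C(X, Z)} {g : C(Y, Z)} (hg : ∀ y, pZ (g y) = pY y) (hpY : IsHurewiczFibration.{v} pY)
    (hpZ : IsHurewiczFibration.{w} pZ) :
    CubesCompressible (IsFiberwise (f := f) (g := g) pZ) := by
  intro n γ hγ
  have hγc : Continuous fun b => (γ b).1 := continuous_subtype_val.comp γ.continuous
  let x : C(Fin n → I, X) := ⟨fun b => (γ b).1.1, continuous_fst.comp hγc⟩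
  let p : C(Fin n → I, C(I, Z)) :=
    ⟨fun b => (γ b).1.2.1, continuous_fst.comp (continuous_snd.comp hγc)⟩
  let y : C(Fin n → I, Y) := ⟨fun b => (γ b).1.2.2, continuous_snd.comp (continuous_snd.comp hγc)⟩
  have hp1 : ∀ b, p b 1 = g (y b) := fun b => (γ b).2.2
  obtain ⟨GY, hGY, hGYbox⟩ := hpY.exists_lift_rel_openBox
    ⟨fun q => pZ (p q.1 (σ q.2)), pZ.continuous.comp <| continuous_eval.comp
      ((p.continuous.comp continuous_fst).prodMk (continuous_symm.comp continuous_snd))⟩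
    (fun q => y q.1) (y.continuous.comp continuous_fst).continuousOn <| by
      rintro ⟨b, s⟩ (hs | hb)
      · simp [show s = 0 from hs, ← hg, hp1]
      · simp [← hg, ← hp1, hγ b hb 1, hγ b hb (σ s), p]
  obtain ⟨P, hP0, hPbd, hPstart, hPend, hPfib⟩ := hpZ.exists_homotopy_paths_into_fiber p
    (g.comp GY) (fun b => by simp [hGYbox (b, 0) (Or.inl rfl), hp1])
    (fun b hb s => by simp [hGYbox (b, s) (Or.inr hb), hp1]) (fun b hb => hγ b hb)
    (fun b s => by simp [hg, hGY])
  refine ⟨⟨fun q => ⟨(x q.1, P q, GY q), (hPstart q).trans (γ q.1).2.1, hPend q⟩, ?_⟩,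
    fun b => ?_, fun b hb s => ?_, fun b t => (hPfib b t).trans (hPfib b 0).symm⟩
  · exact ((x.continuous.comp continuous_fst).prodMk
      (P.continuous.prodMk GY.continuous)).subtype_mk _
  · exact Subtype.ext (Prod.ext rfl (Prod.ext (hP0 b) (hGYbox (b, 0) (Or.inl rfl))))
  · exact Subtype.ext (Prod.ext rfl (Prod.ext (hPbd b hb s) (hGYbox (b, s) (Or.inr hb))))

end HomotopyPullback

theorem fiberwiseHomotopyPullback_inclusion_weakEquiv_general
    {W X Y Z : Type u} [TopologicalSpace W] [TopologicalSpace X] [TopologicalSpace Y]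
    [TopologicalSpace Z]
    (pY : C(Y, W)) (pZ : C(Z, W)) (f : C(X, Z)) (g : C(Y, Z))
    (hg : ∀ y, pZ (g y) = pY y)
    (hpY : Paper.IsHurewiczFibration ⇑pY) (hpZ : Paper.IsHurewiczFibration ⇑pZ) :
    Paper.IsWeakHomotopyEquiv
      (fun q : {q : {q : X × C(I, Z) × Y // q.2.1 0 = f q.1 ∧ q.2.1 1 = g q.2.2} //
          ∀ t : I, pZ (q.1.2.1 t) = pZ (q.1.2.1 0)} => q.1) :=
  (HomotopyPullback.cubesCompressible_isFiberwise hg hpY hpZ).isWeakHomotopyEquiv_subtypeVal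

/-- For a cospan `X → Z ← Y` of spaces over `W` whose structure maps `Y → W` and `Z → W`
are Hurewicz fibrations, the inclusion of the fiberwise homotopy pullback (triples whose
path lies over a constant path in `W`) into the ordinary homotopy pullback is a weak
homotopy equivalence. -/
theorem fiberwiseHomotopyPullback_inclusion_weakEquiv
    {W X Y Z : Type u} [TopologicalSpace W] [TopologicalSpace X] [TopologicalSpace Y]
    [TopologicalSpace Z]
    (pX : C(X, W)) (pY : C(Y, W)) (pZ : C(Z, W)) (f : C(X, Z)) (g : C(Y, Z))
    (hf : ∀ x, pZ (f x) = pX x) (hg : ∀ y, pZ (g y) = pY y)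
    (hpY : Paper.IsHurewiczFibration ⇑pY) (hpZ : Paper.IsHurewiczFibration ⇑pZ) :
    Paper.IsWeakHomotopyEquiv
      (fun q : {q : {q : X × C(I, Z) × Y // q.2.1 0 = f q.1 ∧ q.2.1 1 = g q.2.2} //
          ∀ t : I, pZ (q.1.2.1 t) = pZ (q.1.2.1 0)} => q.1) :=
  fiberwiseHomotopyPullback_inclusion_weakEquiv_general pY pZ f g hg hpY hpZ
end
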